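/- arXiv:2211.03542 — 12 statements merged into one kernel-verified Lean document; each statement's English description precedes it below -/
import Mathlib

section
/- For every q ∈ ℝ with q ∉ {q₋, 0, q₊}, the function p(q) := (q − q₊)(q − q₋)/(r(q)·q) is differentiable at q with derivative p'(q) = 3k² / (4 r(q) q²); combined with r'(q) = 1/p(q), this verifies that along the solution curve dp/dr = (3k²/(4r))·(p/q²), i.e. the pair (p, q) as functions of r solves Buchdahl's evolution equations with Λ = 0. -/
/-!
The exponents of `r` are chosen so that its logarithmic derivative
`q₊/((q₊-q₋)(q-q₊)) - q₋/((q₊-q₋)(q-q₋))` collapses to `q/((q-q₊)(q-q₋))`, i.e. `r' = 1/p`.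
Feeding this into the quotient rule for `p = (q-q₊)(q-q₋)/(r·q)` leaves `p' = -q₊q₋/(r q²)`,
and Vieta gives `q₊q₋ = -3k²/4`.
-/

open Real

theorem abs_sub_rpow_eq_exp {c y : ℝ} (e : ℝ) (hy : y ≠ c) :
    |y - c| ^ e = exp (log (y - c) * e) := by
  rw [rpow_def_of_pos (abs_pos.mpr (sub_ne_zero.mpr hy)), log_abs]

theorem hasDerivAt_abs_sub_rpow {c x : ℝ} (e : ℝ) (hx : x ≠ c) :
    HasDerivAt (fun y => |y - c| ^ e) (|x - c| ^ e * (e / (x - c))) x := by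
  have hexp : HasDerivAt (fun y => exp (log (y - c) * e))
      (exp (log (x - c) * e) * ((x - c)⁻¹ * e)) x := by
    simpa only [id, one_div] using ((((hasDerivAt_id x).sub_const c).log (sub_ne_zero.mpr hx)).mul_const e).exp
  rw [abs_sub_rpow_eq_exp e hx, div_eq_inv_mul]
  refine hexp.congr_of_eventuallyEq ?_
  filter_upwards [eventually_ne_nhds hx] with y hy using abs_sub_rpow_eq_exp e hy

theorem hasDerivAt_abs_sub_rpow_mul_abs_sub_rpow {α β x : ℝ} (a b : ℝ) (hα : x ≠ α)
    (hβ : x ≠ β) :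
    HasDerivAt (fun y => |y - α| ^ a * |y - β| ^ b)
      (|x - α| ^ a * |x - β| ^ b * (a / (x - α) + b / (x - β))) x := by
  refine ((hasDerivAt_abs_sub_rpow a hα).fun_mul (hasDerivAt_abs_sub_rpow b hβ)).congr_deriv ?_
  ring

theorem div_sub_div_sub_add_neg_div_sub_div_sub {α β x : ℝ} (hαβ : α ≠ β) (hα : x ≠ α)
    (hβ : x ≠ β) :
    α / (α - β) / (x - α) + -(β / (α - β)) / (x - β) = x / ((x - α) * (x - β)) := by
  have : α - β ≠ 0 := sub_ne_zero.mpr hαβ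
  have : x - α ≠ 0 := sub_ne_zero.mpr hα
  have : x - β ≠ 0 := sub_ne_zero.mpr hβ
  field_simp
  ring

theorem HasDerivAt.sub_mul_sub_div_mul_self {r : ℝ → ℝ} {α β x : ℝ}
    (hr : HasDerivAt r (r x * (x / ((x - α) * (x - β)))) x) (hrx : r x ≠ 0) (hx : x ≠ 0)
    (hα : x ≠ α) (hβ : x ≠ β) :
    HasDerivAt (fun y => (y - α) * (y - β) / (r y * y)) (-(α * β) / (r x * x ^ 2)) x := by
  have hnum := ((hasDerivAt_id x).sub_const α).fun_mul ((hasDerivAt_id x).sub_const β)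
  refine (hnum.fun_div (hr.fun_mul (hasDerivAt_id x)) (mul_ne_zero hrx hx)).congr_deriv ?_
  have : x - α ≠ 0 := sub_ne_zero.mpr hα
  have : x - β ≠ 0 := sub_ne_zero.mpr hβ
  simp only [id]
  field_simp
  ring

/-- For `q ∉ {q₋, 0, q₊}`, `p(q) = (q−q₊)(q−q₋)/(r(q)·q)` is differentiable at `q` with
derivative `p'(q) = 3k²/(4 r(q) q²)`; combined with `dq/dr = p`, along the solution curve
`dp/dr = p'(q)·p(q) = (3k²/(4r))·(p/q²)`, i.e. Buchdahl's evolution equations with Λ = 0. -/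
theorem special_buchdahl_p_hasDerivAt
    (rs k : ℝ) (hrs : 0 < rs)
    (qp qm : ℝ)
    (hqp : qp = (-rs + Real.sqrt (rs ^ 2 + 3 * k ^ 2)) / 2)
    (hqm : qm = (-rs - Real.sqrt (rs ^ 2 + 3 * k ^ 2)) / 2)
    (r p : ℝ → ℝ)
    (hr : ∀ q : ℝ, r q = |q - qp| ^ (qp / (qp - qm)) * |q - qm| ^ (-(qm / (qp - qm))))
    (hp : ∀ q : ℝ, p q = (q - qp) * (q - qm) / (r q * q))
    (q : ℝ) (h1 : q ≠ qm) (h2 : q ≠ 0) (h3 : q ≠ qp) :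
    HasDerivAt p (3 * k ^ 2 / (4 * r q * q ^ 2)) q ∧
      (3 * k ^ 2 / (4 * r q * q ^ 2)) * p q = (3 * k ^ 2 / (4 * r q)) * (p q / q ^ 2) := by
  have hsqrt : 0 < √(rs ^ 2 + 3 * k ^ 2) := sqrt_pos.mpr (by positivity)
  have hroots : qp ≠ qm := by rw [hqp, hqm]; intro h; linarith
  have hvieta : qp * qm = -(3 * k ^ 2) / 4 := by
    rw [hqp, hqm]
    linear_combination (-1 / 4 : ℝ) * sq_sqrt (by positivity : 0 ≤ rs ^ 2 + 3 * k ^ 2)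
  have hrq : r q ≠ 0 := by
    rw [hr]
    exact mul_ne_zero (rpow_pos_of_pos (abs_sub_pos.mpr h3) _).ne'
      (rpow_pos_of_pos (abs_sub_pos.mpr h1) _).ne'
  have hr' : HasDerivAt r (r q * (q / ((q - qp) * (q - qm)))) q := by
    have := hasDerivAt_abs_sub_rpow_mul_abs_sub_rpow (qp / (qp - qm)) (-(qm / (qp - qm))) h3 h1
    rwa [div_sub_div_sub_add_neg_div_sub_div_sub hroots h3 h1, ← hr, ← funext hr] at this
  refine ⟨?_, by ring⟩
  rw [funext hp]
  convert hr'.sub_mul_sub_div_mul_self hrq h2 h3 h1 using 1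
  rw [hvieta]
  ring
end

section
/- Duality relation: for every q ∈ ℝ with q < q₋ or q > q₊ (and q ≠ 0), one has q · p(q) = r(q₊ + q₋ − q) = r(−r_s − q). -/
open Real

/-- Duality relation: for `q < q₋` or `q > q₊` (and `q ≠ 0`),
`q·p(q) = r(q₊ + q₋ − q) = r(−r_s − q)`. -/
theorem special_buchdahl_duality
    (rs k : ℝ) (hrs : 0 < rs)
    (qp qm : ℝ)
    (hqp : qp = (-rs + Real.sqrt (rs ^ 2 + 3 * k ^ 2)) / 2)
    (hqm : qm = (-rs - Real.sqrt (rs ^ 2 + 3 * k ^ 2)) / 2)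
    (r p : ℝ → ℝ)
    (hr : ∀ q : ℝ, r q = |q - qp| ^ (qp / (qp - qm)) * |q - qm| ^ (-(qm / (qp - qm))))
    (hp : ∀ q : ℝ, p q = (q - qp) * (q - qm) / (r q * q))
    (q : ℝ) (hq : q < qm ∨ qp < q) (hq0 : q ≠ 0) :
    q * p q = r (qp + qm - q) ∧ q * p q = r (-rs - q) := by
  have hs : 0 < Real.sqrt (rs ^ 2 + 3 * k ^ 2) := Real.sqrt_pos.mpr (by positivity)
  have hd : qp - qm = Real.sqrt (rs ^ 2 + 3 * k ^ 2) := by rw [hqp, hqm]; ring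
  have hsum : qp + qm = -rs := by rw [hqp, hqm]; ring
  have hd0 : 0 < qp - qm := hd ▸ hs
  have hqmp : qm < qp := by linarith
  set a := qp / (qp - qm) with ha
  set b := qm / (qp - qm) with hb
  have hab : a - b = 1 := by
    rw [ha, hb, div_sub_div_same, div_self (ne_of_gt hd0)]
  have hA : 0 < |q - qp| := by
    rcases hq with h | h <;> rw [abs_pos] <;> intro h' <;> nlinarith [sub_eq_zero.mp h']
  have hB : 0 < |q - qm| := by
    rcases hq with h | h <;> rw [abs_pos] <;> intro h' <;> nlinarith [sub_eq_zero.mp h']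
  set A := |q - qp| with hAdef
  set B := |q - qm| with hBdef
  have hprod : (q - qp) * (q - qm) = A * B := by
    rcases hq with h | h
    · rw [hAdef, hBdef, abs_of_neg (by linarith), abs_of_neg (by linarith)]; ring
    · rw [hAdef, hBdef, abs_of_pos (by linarith), abs_of_pos (by linarith)]
  have hrq : r q = A ^ a * B ^ (-b) := hr q
  have hrq0 : 0 < r q := by
    rw [hrq]; positivity
  have key : A * B = (A ^ a * B ^ (-b)) * (B ^ a * A ^ (-b)) := by
    have : (A ^ a * B ^ (-b)) * (B ^ a * A ^ (-b)) = (A ^ a * A ^ (-b)) * (B ^ a * B ^ (-b)) := by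
      ring
    rw [this, ← Real.rpow_add hA, ← Real.rpow_add hB]
    have : a + -b = 1 := by linarith
    rw [this, Real.rpow_one, Real.rpow_one]
  have hqp' : q * p q = (q - qp) * (q - qm) / r q := by
    rw [hp q]
    field_simp
  have hmain : q * p q = B ^ a * A ^ (-b) := by
    rw [hqp', hprod, hrq]
    rw [key]
    field_simp
  have hr2 : r (qp + qm - q) = B ^ a * A ^ (-b) := by
    rw [hr (qp + qm - q)]
    have e1 : qp + qm - q - qp = -(q - qm) := by ring
    have e2 : qp + qm - q - qm = -(q - qp) := by ring
    rw [e1, e2, abs_neg, abs_neg]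
  refine ⟨by rw [hmain, hr2], ?_⟩
  rw [hmain, ← hr2, ← hsum]
end

section
/- Assume k ≠ 0, so q₋ < 0 < q₊. For every q ∈ (q₋, q₊) with q ≠ 0, the derivative of r satisfies r'(q) = −q · (q₊ − q)^{q₋/(q₊−q₋)} · (q − q₋)^{−q₊/(q₊−q₋)}; consequently r is strictly increasing on (q₋, 0), strictly decreasing on (0, q₊), and attains its strict maximum on (q₋, q₊) at q = 0 with value r(0) = r_* := |q₊|^{q₊/(q₊−q₋)} · |q₋|^{−q₋/(q₊−q₋)}, i.e. r(q) < r_* for all q ∈ (q₋, q₊) with q ≠ 0. -/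
/-!
On `(q₋, q₊)` we have `r(q) = (q₊ - q)^α (q - q₋)^β` with `α = q₊/(q₊ - q₋)`,
`β = -q₋/(q₊ - q₋)`. Since `α + β = 1` and `α q₋ + β q₊ = 0`, its derivative
`(q₊ - q)^(α-1) (q - q₋)^(β-1) (β (q₊ - q) - α (q - q₋))` collapses to
`-q (q₊ - q)^(α-1) (q - q₋)^(β-1)`, whose sign is that of `-q`. For `k ≠ 0`,
`√(r_s² + 3k²) > |r_s|` gives `q₋ < 0 < q₊`, so `r` rises up to `0` and falls after it.
-/

open Real Set

namespace SpecialBuchdahl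

noncomputable def radius (qm qp q : ℝ) : ℝ :=
  |q - qp| ^ (qp / (qp - qm)) * |q - qm| ^ (-(qm / (qp - qm)))

variable {qm qp : ℝ}

theorem radius_eqOn_Ioo :
    EqOn (radius qm qp) (fun q ↦ (qp - q) ^ (qp / (qp - qm)) * (q - qm) ^ (-(qm / (qp - qm))))
      (Ioo qm qp) := by
  intro q hq
  rw [radius, abs_of_neg (sub_neg.mpr hq.2), abs_of_pos (sub_pos.mpr hq.1), neg_sub]

theorem hasDerivAt_radius (hqm : qm < qp) {q : ℝ} (hq : q ∈ Ioo qm qp) :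
    HasDerivAt (radius qm qp)
      (-q * (qp - q) ^ (qm / (qp - qm)) * (q - qm) ^ (-(qp / (qp - qm)))) q := by
  set α := qp / (qp - qm)
  set β := -(qm / (qp - qm))
  have hA : 0 < qp - q := sub_pos.mpr hq.2
  have hB : 0 < q - qm := sub_pos.mpr hq.1
  have hd : qp - qm ≠ 0 := (sub_pos.mpr hqm).ne'
  have hα : α - 1 = qm / (qp - qm) := by simp only [α]; field_simp; ring
  have hβ : β - 1 = -(qp / (qp - qm)) := by simp only [β]; field_simp; ring
  have hA' : HasDerivAt (fun x ↦ (qp - x) ^ α) (α * (qp - q) ^ (α - 1) * -1) q := by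
    simpa [Function.comp_def] using (hasDerivAt_rpow_const (p := α) (Or.inl hA.ne')).comp q
      ((hasDerivAt_id q).const_sub qp)
  have hB' : HasDerivAt (fun x ↦ (x - qm) ^ β) (β * (q - qm) ^ (β - 1) * 1) q := by
    simpa [Function.comp_def] using (hasDerivAt_rpow_const (p := β) (Or.inl hB.ne')).comp q
      ((hasDerivAt_id q).sub_const qm)
  have hderiv :
      α * (qp - q) ^ (α - 1) * -1 * (q - qm) ^ β + (qp - q) ^ α * (β * (q - qm) ^ (β - 1) * 1)
        = -q * (qp - q) ^ (α - 1) * (q - qm) ^ (β - 1) := by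
    have hsum : α + β = 1 := by simp only [α, β]; field_simp; ring
    have hcross : α * qm + β * qp = 0 := by simp only [α, β]; field_simp; ring
    rw [← sub_add_cancel α 1, rpow_add_one hA.ne', ← sub_add_cancel β 1, rpow_add_one hB.ne']
    simp only [add_sub_cancel_right]
    linear_combination ((qp - q) ^ (α - 1) * (q - qm) ^ (β - 1)) * (hcross - q * hsum)
  rw [← hα, ← hβ, ← hderiv]
  exact (hA'.mul hB').congr_of_eventuallyEq
    (radius_eqOn_Ioo.eventuallyEq_of_mem (isOpen_Ioo.mem_nhds hq))

variable (qm qp) in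
theorem radius_zero :
    radius qm qp 0 = |qp| ^ (qp / (qp - qm)) * |qm| ^ (-(qm / (qp - qm))) := by
  simp [radius]

theorem strictMonoOn_radius (hqm : qm < 0) (hqp : 0 < qp) :
    StrictMonoOn (radius qm qp) (Ioc qm 0) := by
  have hD (x : ℝ) (hx : x ∈ Ioc qm 0) :=
    hasDerivAt_radius (hqm.trans hqp) ⟨hx.1, hx.2.trans_lt hqp⟩
  refine strictMonoOn_of_hasDerivWithinAt_pos (convex_Ioc qm 0)
    (fun x hx ↦ (hD x hx).continuousAt.continuousWithinAt)
    (fun x hx ↦ (hD x (interior_subset hx)).hasDerivWithinAt) fun x hx ↦ ?_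
  rw [interior_Ioc] at hx
  exact mul_pos (mul_pos (neg_pos.mpr hx.2) (rpow_pos_of_pos (by linarith [hx.2]) _))
    (rpow_pos_of_pos (sub_pos.mpr hx.1) _)

theorem strictAntiOn_radius (hqm : qm < 0) (hqp : 0 < qp) :
    StrictAntiOn (radius qm qp) (Ico 0 qp) := by
  have hD (x : ℝ) (hx : x ∈ Ico 0 qp) :=
    hasDerivAt_radius (hqm.trans hqp) ⟨hqm.trans_le hx.1, hx.2⟩
  refine strictAntiOn_of_hasDerivWithinAt_neg (convex_Ico 0 qp)
    (fun x hx ↦ (hD x hx).continuousAt.continuousWithinAt)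
    (fun x hx ↦ (hD x (interior_subset hx)).hasDerivWithinAt) fun x hx ↦ ?_
  rw [interior_Ico] at hx
  exact mul_neg_of_neg_of_pos (mul_neg_of_neg_of_pos (neg_neg_iff_pos.mpr hx.1)
    (rpow_pos_of_pos (sub_pos.mpr hx.2) _)) (rpow_pos_of_pos (by linarith [hx.1]) _)

theorem radius_lt_radius_zero (hqm : qm < 0) (hqp : 0 < qp) {q : ℝ} (hq : q ∈ Ioo qm qp)
    (hq0 : q ≠ 0) : radius qm qp q < radius qm qp 0 := by
  rcases hq0.lt_or_gt with hneg | hpos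
  · exact strictMonoOn_radius hqm hqp ⟨hq.1, hneg.le⟩ ⟨hqm, le_rfl⟩ hneg
  · exact strictAntiOn_radius hqm hqp ⟨le_rfl, hqp⟩ ⟨hpos.le, hq.2⟩ hpos

end SpecialBuchdahl

theorem abs_lt_sqrt_sq_add (b : ℝ) {c : ℝ} (hc : 0 < c) : |b| < √(b ^ 2 + c) :=
  lt_sqrt_of_sq_lt (by rw [sq_abs]; linarith)

open SpecialBuchdahl in
theorem special_buchdahl_r_peak_general
    (rs k : ℝ) (hk : k ≠ 0)
    (qp qm : ℝ)
    (hqp : qp = (-rs + Real.sqrt (rs ^ 2 + 3 * k ^ 2)) / 2)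
    (hqm : qm = (-rs - Real.sqrt (rs ^ 2 + 3 * k ^ 2)) / 2)
    (r : ℝ → ℝ)
    (hr : ∀ q : ℝ, r q = |q - qp| ^ (qp / (qp - qm)) * |q - qm| ^ (-(qm / (qp - qm))))
    (rstar : ℝ)
    (hstar : rstar = |qp| ^ (qp / (qp - qm)) * |qm| ^ (-(qm / (qp - qm)))) :
    (∀ q ∈ Set.Ioo qm qp, q ≠ 0 →
        HasDerivAt r
          (-q * (qp - q) ^ (qm / (qp - qm)) * (q - qm) ^ (-(qp / (qp - qm)))) q) ∧
      StrictMonoOn r (Set.Ioo qm 0) ∧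
      StrictAntiOn r (Set.Ioo 0 qp) ∧
      r 0 = rstar ∧
      (∀ q ∈ Set.Ioo qm qp, q ≠ 0 → r q < rstar) := by
  obtain ⟨hlo, hhi⟩ := abs_lt.mp (abs_lt_sqrt_sq_add rs (c := 3 * k ^ 2) (by positivity))
  have hqm0 : qm < 0 := by rw [hqm]; linarith
  have hqp0 : 0 < qp := by rw [hqp]; linarith
  obtain rfl : r = radius qm qp := funext hr
  rw [hstar, ← radius_zero]
  exact ⟨fun q hq _ ↦ hasDerivAt_radius (hqm0.trans hqp0) hq,
    (strictMonoOn_radius hqm0 hqp0).mono Ioo_subset_Ioc_self,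
    (strictAntiOn_radius hqm0 hqp0).mono Ioo_subset_Ico_self, rfl,
    fun q hq hq0 ↦ radius_lt_radius_zero hqm0 hqp0 hq hq0⟩

/-- For `k ≠ 0` (so `q₋ < 0 < q₊`), on `(q₋, q₊) \ {0}` the derivative of `r` is
`r'(q) = −q·(q₊−q)^{q₋/(q₊−q₋)}·(q−q₋)^{−q₊/(q₊−q₋)}`; hence `r` is strictly increasing
on `(q₋,0)`, strictly decreasing on `(0,q₊)`, and attains its strict maximum on `(q₋,q₊)`
at `q = 0` with value `r_* = |q₊|^{q₊/(q₊−q₋)}·|q₋|^{−q₋/(q₊−q₋)}`. -/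
theorem special_buchdahl_r_peak
    (rs k : ℝ) (hrs : 0 < rs) (hk : k ≠ 0)
    (qp qm : ℝ)
    (hqp : qp = (-rs + Real.sqrt (rs ^ 2 + 3 * k ^ 2)) / 2)
    (hqm : qm = (-rs - Real.sqrt (rs ^ 2 + 3 * k ^ 2)) / 2)
    (r : ℝ → ℝ)
    (hr : ∀ q : ℝ, r q = |q - qp| ^ (qp / (qp - qm)) * |q - qm| ^ (-(qm / (qp - qm))))
    (rstar : ℝ)
    (hstar : rstar = |qp| ^ (qp / (qp - qm)) * |qm| ^ (-(qm / (qp - qm)))) :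
    (∀ q ∈ Set.Ioo qm qp, q ≠ 0 →
        HasDerivAt r
          (-q * (qp - q) ^ (qm / (qp - qm)) * (q - qm) ^ (-(qp / (qp - qm)))) q) ∧
      StrictMonoOn r (Set.Ioo qm 0) ∧
      StrictAntiOn r (Set.Ioo 0 qp) ∧
      r 0 = rstar ∧
      (∀ q ∈ Set.Ioo qm qp, q ≠ 0 → r q < rstar) :=
  special_buchdahl_r_peak_general rs k hk qp qm hqp hqm r hr rstar hstar
end

section
/- Inversion lemma: assume k ≠ 0 and let q ∈ ℝ with q ∉ {q₋, q₊}. Define X := sgn((q − q₊)/(q − q₋)) · |(q − q₊)/(q − q₋)|^{1/ζ}, so that sgn(X)|X|^ζ = (q − q₊)/(q − q₋). Then r(q) = ζ r_s · |X|^{(ζ−1)/2} / |1 − sgn(X)·|X|^{ζ}|. -/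
open Real

/-!
`X` is the signed `ζ`-th root of `u = (q - q₊)/(q - q₋)`, so `sgn(X)|X|^ζ = u` and
`|X|^{(ζ - 1)/2} = |u|^{(ζ - 1)/(2ζ)}`. Since `1 - u = (q₊ - q₋)/(q - q₋)` and the two exponents of `r`
add up to `1`, `r(q) = |q₊ - q₋| |u|^{q₊/(q₊ - q₋)} / |1 - u|`; for the special parameters
`q₊ - q₋ = ζ r_s` and `q₊/(q₊ - q₋) = (ζ - 1)/(2ζ)`.
-/

noncomputable def signedRpow (x p : ℝ) : ℝ := Real.sign x * |x| ^ p

lemma Real.sign_mul_abs (x : ℝ) : Real.sign x * |x| = x := by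
  rcases lt_trichotomy x 0 with hx | rfl | hx
  · rw [Real.sign_of_neg hx, abs_of_neg hx]; ring
  · simp
  · rw [Real.sign_of_pos hx, abs_of_pos hx, one_mul]

lemma sign_signedRpow (x p : ℝ) : Real.sign (signedRpow x p) = Real.sign x := by
  rcases lt_trichotomy x 0 with hx | rfl | hx
  · have : 0 < |x| ^ p := rpow_pos_of_pos (abs_pos.mpr hx.ne) p
    rw [signedRpow, Real.sign_of_neg hx, Real.sign_of_neg (by linarith)]
  · simp [signedRpow]
  · have : 0 < |x| ^ p := rpow_pos_of_pos (abs_pos.mpr hx.ne') p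
    rw [signedRpow, Real.sign_of_pos hx, Real.sign_of_pos (by linarith)]

lemma abs_signedRpow (x : ℝ) {p : ℝ} (hp : p ≠ 0) : |signedRpow x p| = |x| ^ p := by
  rcases lt_trichotomy x 0 with hx | rfl | hx
  · rw [signedRpow, Real.sign_of_neg hx, abs_mul, abs_neg, abs_one, one_mul,
      abs_of_nonneg (rpow_nonneg (abs_nonneg x) p)]
  · simp [signedRpow, zero_rpow hp]
  · rw [signedRpow, Real.sign_of_pos hx, abs_mul, abs_one, one_mul,
      abs_of_nonneg (rpow_nonneg (abs_nonneg x) p)]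

lemma signedRpow_signedRpow_inv {p : ℝ} (hp : p ≠ 0) (x : ℝ) :
    signedRpow (signedRpow x p⁻¹) p = x := by
  rw [signedRpow, sign_signedRpow, abs_signedRpow x (inv_ne_zero hp), ← rpow_mul (abs_nonneg x),
    inv_mul_cancel₀ hp, rpow_one, Real.sign_mul_abs]

lemma abs_sub_rpow_mul_abs_sub_rpow_eq {a b q : ℝ} (hab : a ≠ b) (hqb : q ≠ b) :
    |q - a| ^ (a / (a - b)) * |q - b| ^ (-(b / (a - b))) =
      |a - b| * |(q - a) / (q - b)| ^ (a / (a - b)) / |1 - (q - a) / (q - b)| := by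
  have hd : a - b ≠ 0 := sub_ne_zero.mpr hab
  have hqb' : q - b ≠ 0 := sub_ne_zero.mpr hqb
  have hqb_pos : 0 < |q - b| := abs_pos.mpr hqb'
  have h_one_sub : 1 - (q - a) / (q - b) = (a - b) / (q - b) := by field_simp; ring
  have h_exponent : -(b / (a - b)) = 1 - a / (a - b) := by field_simp; ring
  rw [h_one_sub, h_exponent, rpow_sub hqb_pos, rpow_one, abs_div, abs_div,
    div_rpow (abs_nonneg _) (abs_nonneg _)]
  field_simp [abs_ne_zero.mpr hd]

lemma sqrt_one_add_div_sq_mul {s : ℝ} (hs : 0 < s) (c : ℝ) :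
    √(1 + c / s ^ 2) * s = √(s ^ 2 + c) := by
  rw [← sqrt_sq hs.le, ← sqrt_mul' _ (sq_nonneg s), sqrt_sq hs.le]
  congr 1
  field_simp

theorem special_buchdahl_inversion_general
    (rs k : ℝ) (hrs : 0 < rs)
    (qp qm ζ : ℝ)
    (hqp : qp = (-rs + Real.sqrt (rs ^ 2 + 3 * k ^ 2)) / 2)
    (hqm : qm = (-rs - Real.sqrt (rs ^ 2 + 3 * k ^ 2)) / 2)
    (hζ : ζ = Real.sqrt (1 + 3 * k ^ 2 / rs ^ 2))
    (r : ℝ → ℝ)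
    (hr : ∀ q : ℝ, r q = |q - qp| ^ (qp / (qp - qm)) * |q - qm| ^ (-(qm / (qp - qm))))
    (q : ℝ) (h1 : q ≠ qm)
    (X : ℝ)
    (hX : X = Real.sign ((q - qp) / (q - qm)) * |(q - qp) / (q - qm)| ^ (1 / ζ)) :
    Real.sign X * |X| ^ ζ = (q - qp) / (q - qm) ∧
      r q = ζ * rs * |X| ^ ((ζ - 1) / 2) / |1 - Real.sign X * |X| ^ ζ| := by
  have hζrs : ζ * rs = √(rs ^ 2 + 3 * k ^ 2) := hζ ▸ sqrt_one_add_div_sq_mul hrs _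
  rw [← hζrs] at hqp hqm
  have hζ_pos : 0 < ζ := pos_of_mul_pos_left (hζrs ▸ sqrt_pos.mpr (by positivity)) hrs.le
  have hdiff : qp - qm = ζ * rs := by rw [hqp, hqm]; ring
  have hexponent : 1 / ζ * ((ζ - 1) / 2) = qp / (qp - qm) := by
    rw [hdiff, hqp]; field_simp; ring
  set u := (q - qp) / (q - qm)
  have hXu : Real.sign X * |X| ^ ζ = u := by
    rw [hX, one_div]; exact signedRpow_signedRpow_inv hζ_pos.ne' u
  refine ⟨hXu, ?_⟩
  have habsX : |X| = |u| ^ (1 / ζ) := hX ▸ abs_signedRpow u (one_div_ne_zero hζ_pos.ne')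
  rw [hXu, hr, habsX, ← rpow_mul (abs_nonneg u), hexponent,
    abs_sub_rpow_mul_abs_sub_rpow_eq (by linarith [mul_pos hζ_pos hrs]) h1, hdiff,
    abs_of_pos (mul_pos hζ_pos hrs)]

/-- Inversion lemma: for `k ≠ 0` and `q ∉ {q₋, q₊}`, with
`X := sgn((q−q₊)/(q−q₋))·|(q−q₊)/(q−q₋)|^{1/ζ}`, one has
`sgn(X)|X|^ζ = (q−q₊)/(q−q₋)` and `r(q) = ζ r_s |X|^{(ζ−1)/2} / |1 − sgn(X)|X|^ζ|`. -/
theorem special_buchdahl_inversion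
    (rs k : ℝ) (hrs : 0 < rs) (hk : k ≠ 0)
    (qp qm ζ : ℝ)
    (hqp : qp = (-rs + Real.sqrt (rs ^ 2 + 3 * k ^ 2)) / 2)
    (hqm : qm = (-rs - Real.sqrt (rs ^ 2 + 3 * k ^ 2)) / 2)
    (hζ : ζ = Real.sqrt (1 + 3 * k ^ 2 / rs ^ 2))
    (r : ℝ → ℝ)
    (hr : ∀ q : ℝ, r q = |q - qp| ^ (qp / (qp - qm)) * |q - qm| ^ (-(qm / (qp - qm))))
    (q : ℝ) (h1 : q ≠ qm) (h2 : q ≠ qp)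
    (X : ℝ)
    (hX : X = Real.sign ((q - qp) / (q - qm)) * |(q - qp) / (q - qm)| ^ (1 / ζ)) :
    Real.sign X * |X| ^ ζ = (q - qp) / (q - qm) ∧
      r q = ζ * rs * |X| ^ ((ζ - 1) / 2) / |1 - Real.sign X * |X| ^ ζ| :=
  special_buchdahl_inversion_general rs k hrs qp qm ζ hqp hqm hζ r hr q h1 X hX
end

section
/- Anomalous surface area of the interior-exterior boundary: as ρ → r_s (through ρ > 0, ρ ≠ r_s), the surface-area function A(ρ) satisfies: A(ρ) → 4π r_s² if k̃ = 0; A(ρ) → 16π r_s² if k̃ = −1; A(ρ) → 0 if k̃ < −1 or k̃ > 0; and A(ρ) → +∞ if −1 < k̃ < 0. -/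
open Real Filter Topology

/-! With `x = 1 - r_s / ρ`, which tends to `0` through nonzero values,
`A = c |x| ^ e / (1 - sgn x |x| ^ ζ) ^ 2` with `c = 4π ζ² r_s²` and `e = ζ + k̃ - 1`. Since `ζ > 0`
the denominator tends to `1`, so the limit is decided by the sign of `e`. As
`ζ² - (1 - k̃)² = 2 k̃ (k̃ + 1)`, `e` vanishes for `k̃ ∈ {0, -1}` (where `ζ = 1, 2`), is positive
for `k̃ < -1` or `k̃ > 0`, and negative for `-1 < k̃ < 0`. -/

lemma Real.abs_sign_le_one (r : ℝ) : |Real.sign r| ≤ 1 := by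
  rcases Real.sign_apply_eq r with h | h | h <;> simp [h]

lemma tendsto_one_sub_div_nhdsNE {r : ℝ} (hr : r ≠ 0) :
    Tendsto (fun ρ => 1 - r / ρ) (𝓝[≠] r) (𝓝[≠] 0) := by
  refine tendsto_nhdsWithin_iff.2 ⟨?_, ?_⟩
  · have : ContinuousAt (fun ρ => 1 - r / ρ) r :=
      continuousAt_const.sub (continuousAt_const.div continuousAt_id hr)
    simpa [div_self hr] using this.tendsto.mono_left nhdsWithin_le_nhds
  · filter_upwards [self_mem_nhdsWithin] with ρ hρ
    rcases eq_or_ne ρ 0 with rfl | hρ0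
    · simp
    · show 1 - r / ρ ≠ 0
      rw [sub_ne_zero, ne_comm, Ne, div_eq_one_iff_eq hρ0]
      exact Ne.symm hρ

lemma tendsto_sign_mul_abs_rpow_nhds_zero {ζ : ℝ} (hζ : 0 < ζ) :
    Tendsto (fun t : ℝ => Real.sign t * |t| ^ ζ) (𝓝 0) (𝓝 0) := by
  have habs : Tendsto (fun t : ℝ => |t| ^ ζ) (𝓝 0) (𝓝 0) := by
    have := (continuousAt_rpow_const 0 ζ (Or.inr hζ.le)).tendsto.comp
      (continuous_abs.tendsto' 0 0 abs_zero)
    rwa [zero_rpow hζ.ne'] at this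
  refine squeeze_zero_norm (fun t => ?_) habs
  have hpow : 0 ≤ |t| ^ ζ := rpow_nonneg (abs_nonneg t) ζ
  calc ‖Real.sign t * |t| ^ ζ‖ = |Real.sign t| * |t| ^ ζ := by
        rw [Real.norm_eq_abs, abs_mul, abs_of_nonneg hpow]
    _ ≤ |t| ^ ζ := mul_le_of_le_one_left hpow (Real.abs_sign_le_one t)

lemma tendsto_one_sub_sign_mul_abs_rpow_sq {ζ : ℝ} (hζ : 0 < ζ) :
    Tendsto (fun t : ℝ => (1 - Real.sign t * |t| ^ ζ) ^ 2) (𝓝 0) (𝓝 1) := by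
  simpa using
    ((tendsto_const_nhds (x := (1 : ℝ))).sub (tendsto_sign_mul_abs_rpow_nhds_zero hζ)).pow 2

noncomputable def areaProfile (c e ζ t : ℝ) : ℝ :=
  c * |t| ^ e / (1 - Real.sign t * |t| ^ ζ) ^ 2

lemma tendsto_areaProfile_nhds {c e ζ : ℝ} (he : 0 ≤ e) (hζ : 0 < ζ) :
    Tendsto (areaProfile c e ζ) (𝓝 0) (𝓝 (c * 0 ^ e)) := by
  have hnum : Tendsto (fun t : ℝ => c * |t| ^ e) (𝓝 0) (𝓝 (c * 0 ^ e)) := by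
    simpa using ((continuousAt_rpow_const 0 e (Or.inr he)).tendsto.comp
      (continuous_abs.tendsto' 0 0 abs_zero)).const_mul c
  have := hnum.div (tendsto_one_sub_sign_mul_abs_rpow_sq hζ) one_ne_zero
  rwa [div_one] at this

lemma tendsto_areaProfile_atTop {c e ζ : ℝ} (hc : 0 < c) (he : e < 0) (hζ : 0 < ζ) :
    Tendsto (areaProfile c e ζ) (𝓝[≠] 0) atTop := by
  have hpow : Tendsto (fun t : ℝ => |t| ^ e) (𝓝[≠] 0) atTop :=
    (tendsto_rpow_neg_nhdsGT_zero he).comp tendsto_abs_nhdsNE_zero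
  have hfactor : Tendsto (fun t : ℝ => c / (1 - Real.sign t * |t| ^ ζ) ^ 2) (𝓝[≠] 0) (𝓝 c) := by
    have := (tendsto_const_nhds (x := c)).div (tendsto_one_sub_sign_mul_abs_rpow_sq hζ) one_ne_zero
    rw [div_one] at this
    exact this.mono_left nhdsWithin_le_nhds
  exact (hfactor.pos_mul_atTop hc hpow).congr fun t => div_mul_eq_mul_div _ _ _

lemma one_sub_lt_sqrt_one_add_three_mul_sq {k : ℝ} (hk : k < -1 ∨ 0 < k) :
    1 - k < √(1 + 3 * k ^ 2) := by
  rcases hk with hk | hk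
  · rw [lt_sqrt (by linarith)]
    nlinarith
  · calc 1 - k < 1 := by linarith
      _ ≤ √(1 + 3 * k ^ 2) := one_le_sqrt.2 (by nlinarith)

lemma sqrt_one_add_three_mul_sq_lt_one_sub {k : ℝ} (hk₁ : -1 < k) (hk₀ : k < 0) :
    √(1 + 3 * k ^ 2) < 1 - k := by
  rw [sqrt_lt' (by linarith)]
  nlinarith

lemma tendsto_nhdsWithin_of_eqOn_comp_one_sub_div {r : ℝ} (hr : r ≠ 0) {s : Set ℝ}
    (hs : r ∉ s) {A f : ℝ → ℝ} {L : Filter ℝ} (hA : ∀ ρ ∈ s, A ρ = f (1 - r / ρ))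
    (hf : Tendsto f (𝓝[≠] 0) L) : Tendsto A (𝓝[s] r) L := by
  have hle : 𝓝[s] r ≤ 𝓝[≠] r :=
    nhdsWithin_mono r fun ρ hρ (h : ρ = r) => hs (h ▸ hρ)
  refine (hf.comp ((tendsto_one_sub_div_nhdsNE hr).mono_left hle)).congr' ?_
  filter_upwards [self_mem_nhdsWithin] with ρ hρ
  exact (hA ρ hρ).symm

/-- Anomalous surface area of the interior-exterior boundary: as `ρ → r_s` (through
`ρ > 0`, `ρ ≠ r_s`), `A(ρ) → 4π r_s²` if `k̃ = 0`; `→ 16π r_s²` if `k̃ = −1`;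
`→ 0` if `k̃ < −1` or `k̃ > 0`; and `→ +∞` if `−1 < k̃ < 0`. -/
theorem surface_area_boundary_anomaly
    (rs kt : ℝ) (hrs : 0 < rs)
    (ζ : ℝ) (hζ : ζ = Real.sqrt (1 + 3 * kt ^ 2))
    (A : ℝ → ℝ)
    (hA : ∀ ρ : ℝ, 0 < ρ → ρ ≠ rs → A ρ =
      4 * Real.pi * ζ ^ 2 * rs ^ 2 * |1 - rs / ρ| ^ (ζ + kt - 1) /
        (1 - Real.sign (1 - rs / ρ) * |1 - rs / ρ| ^ ζ) ^ 2) :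
    (kt = 0 →
        Tendsto A (𝓝[Set.Ioi 0 \ {rs}] rs) (𝓝 (4 * Real.pi * rs ^ 2))) ∧
      (kt = -1 →
        Tendsto A (𝓝[Set.Ioi 0 \ {rs}] rs) (𝓝 (16 * Real.pi * rs ^ 2))) ∧
      (kt < -1 ∨ 0 < kt →
        Tendsto A (𝓝[Set.Ioi 0 \ {rs}] rs) (𝓝 0)) ∧
      (-1 < kt ∧ kt < 0 →
        Tendsto A (𝓝[Set.Ioi 0 \ {rs}] rs) atTop) := by
  have hζpos : 0 < ζ := hζ ▸ sqrt_pos.2 (by positivity)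
  have hlim : ∀ {L : Filter ℝ},
      Tendsto (areaProfile (4 * π * ζ ^ 2 * rs ^ 2) (ζ + kt - 1) ζ) (𝓝[≠] 0) L →
        Tendsto A (𝓝[Set.Ioi 0 \ {rs}] rs) L :=
    tendsto_nhdsWithin_of_eqOn_comp_one_sub_div hrs.ne' (fun h => h.2 rfl)
      fun ρ hρ => hA ρ hρ.1 hρ.2
  refine ⟨fun hk => ?_, fun hk => ?_, fun hk => ?_, fun ⟨hk₁, hk₀⟩ => ?_⟩
  · subst hk
    obtain rfl : ζ = 1 := by simpa using hζ
    simpa using hlim ((tendsto_areaProfile_nhds (by norm_num) hζpos).mono_left nhdsWithin_le_nhds)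
  · subst hk
    obtain rfl : ζ = 2 := by norm_num at hζ; exact hζ
    convert hlim ((tendsto_areaProfile_nhds (by norm_num) hζpos).mono_left nhdsWithin_le_nhds)
      using 2
    rw [show (2 : ℝ) + -1 - 1 = 0 by norm_num, rpow_zero]
    ring
  · have he : 0 < ζ + kt - 1 := by linarith [hζ ▸ one_sub_lt_sqrt_one_add_three_mul_sq hk]
    simpa [zero_rpow he.ne'] using
      hlim ((tendsto_areaProfile_nhds he.le hζpos).mono_left nhdsWithin_le_nhds)
  · have he : ζ + kt - 1 < 0 := by linarith [hζ ▸ sqrt_one_add_three_mul_sq_lt_one_sub hk₁ hk₀]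
    exact hlim (tendsto_areaProfile_atTop (by positivity) he hζpos)
end

section
/- As ρ → 0⁺, the surface-area function satisfies lim_{ρ→0⁺} A(ρ) · (r_s/ρ)^{ζ − k̃ + 1} = 4π ζ² r_s²; since ζ − k̃ + 1 > 0 for all k̃ ∈ ℝ, consequently A(ρ) → 0 as ρ → 0⁺. -/
/-!
Put `t = ρ / r_s`. For `0 < ρ < r_s` one has `1 - r_s/ρ = -(1 - t)/t < 0`, and since the exponents
`ζ + k̃ - 1` and `ζ - k̃ + 1` add up to `2ζ`, all powers of `t` cancel:
`A(ρ) (r_s/ρ)^{ζ - k̃ + 1} = 4π ζ² r_s² (1 - t)^{ζ + k̃ - 1} / (t^ζ + (1 - t)^ζ)²`,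
which is continuous at `t = 0` (as `ζ > 0`) with value `4π ζ² r_s²`. Finally `ζ > |k̃|`, so the
exponent is positive and the factor `(ρ/r_s)^{ζ - k̃ + 1}` drives `A(ρ)` to `0`.
-/

open Real Filter Topology

lemma lt_sqrt_one_add_three_mul_sq (k : ℝ) : k < √(1 + 3 * k ^ 2) :=
  calc k ≤ |k| := le_abs_self k
    _ = √(k ^ 2) := (Real.sqrt_sq_eq_abs k).symm
    _ < √(1 + 3 * k ^ 2) := Real.sqrt_lt_sqrt (sq_nonneg k) (by nlinarith [sq_nonneg k])

lemma surfaceArea_mul_rpow_inv_eq {t : ℝ} (ht₀ : 0 < t) (ht₁ : t < 1) (C a b ζ : ℝ)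
    (hab : a + b = 2 * ζ) :
    C * |1 - t⁻¹| ^ a / (1 - Real.sign (1 - t⁻¹) * |1 - t⁻¹| ^ ζ) ^ 2 * t⁻¹ ^ b =
      C * (1 - t) ^ a / (t ^ ζ + (1 - t) ^ ζ) ^ 2 := by
  have hneg : 1 - t⁻¹ < 0 := sub_neg.2 (one_lt_inv₀ ht₀ |>.2 ht₁)
  have hs : 0 < 1 - t := sub_pos.2 ht₁
  have habs : |1 - t⁻¹| = (1 - t) / t := by
    rw [abs_of_neg hneg]; field_simp; ring
  have hpow : t ^ a * t ^ b = t ^ ζ * t ^ ζ := by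
    rw [← Real.rpow_add ht₀, ← Real.rpow_add ht₀, hab, two_mul]
  rw [Real.sign_of_neg hneg, habs, Real.div_rpow hs.le ht₀.le, Real.div_rpow hs.le ht₀.le,
    Real.inv_rpow ht₀.le, neg_one_mul, sub_neg_eq_add]
  have hta := Real.rpow_pos_of_pos ht₀ a
  have htb := Real.rpow_pos_of_pos ht₀ b
  have htζ := Real.rpow_pos_of_pos ht₀ ζ
  have hsζ := Real.rpow_pos_of_pos hs ζ
  have hden : 0 < t ^ ζ + (1 - t) ^ ζ := by positivity
  field_simp
  rw [mul_assoc, hpow]; ring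

lemma continuousAt_rpow_div_sq_rpow_add_rpow {a ζ : ℝ} (hζ : 0 < ζ) :
    ContinuousAt (fun t : ℝ => (1 - t) ^ a / (t ^ ζ + (1 - t) ^ ζ) ^ 2) 0 := by
  have hbase : ContinuousAt (fun t : ℝ => 1 - t) 0 := by fun_prop
  have hone : (1 : ℝ) - 0 ≠ 0 := by norm_num
  refine ContinuousAt.div (hbase.rpow_const (.inl hone)) ?_ ?_
  · exact ((continuousAt_id.rpow_const (.inr hζ.le)).add (hbase.rpow_const (.inl hone))).pow 2
  · simp [Real.zero_rpow hζ.ne']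

lemma tendsto_nhdsGT_zero_of_tendsto_mul_div_rpow {f : ℝ → ℝ} {c e L : ℝ} (hc : 0 < c)
    (he : 0 < e) (h : Tendsto (fun ρ => f ρ * (c / ρ) ^ e) (𝓝[>] 0) (𝓝 L)) :
    Tendsto f (𝓝[>] 0) (𝓝 0) := by
  have hdiv : Tendsto (fun ρ : ℝ => ρ / c) (𝓝[>] 0) (𝓝 0) :=
    ((continuous_id.div_const c).tendsto' 0 0 (zero_div c)).mono_left nhdsWithin_le_nhds
  have hpow : Tendsto (fun ρ : ℝ => (ρ / c) ^ e) (𝓝[>] 0) (𝓝 0) := by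
    simpa [Real.zero_rpow he.ne'] using hdiv.rpow_const (.inr he.le)
  refine (mul_zero L ▸ h.mul hpow).congr' ?_
  filter_upwards [self_mem_nhdsWithin] with ρ (hρ : 0 < ρ)
  have hcancel : c / ρ * (ρ / c) = 1 := by field_simp
  rw [mul_assoc, ← Real.mul_rpow (by positivity) (by positivity), hcancel, Real.one_rpow,
    mul_one]

/-- As `ρ → 0⁺`, `A(ρ)·(r_s/ρ)^{ζ − k̃ + 1} → 4π ζ² r_s²`; since `ζ − k̃ + 1 > 0`,
consequently `A(ρ) → 0` as `ρ → 0⁺`. -/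
theorem surface_area_origin_asymptotics
    (rs kt : ℝ) (hrs : 0 < rs)
    (ζ : ℝ) (hζ : ζ = Real.sqrt (1 + 3 * kt ^ 2))
    (A : ℝ → ℝ)
    (hA : ∀ ρ : ℝ, 0 < ρ → ρ ≠ rs → A ρ =
      4 * Real.pi * ζ ^ 2 * rs ^ 2 * |1 - rs / ρ| ^ (ζ + kt - 1) /
        (1 - Real.sign (1 - rs / ρ) * |1 - rs / ρ| ^ ζ) ^ 2) :
    Tendsto (fun ρ : ℝ => A ρ * (rs / ρ) ^ (ζ - kt + 1)) (𝓝[>] 0)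
        (𝓝 (4 * Real.pi * ζ ^ 2 * rs ^ 2)) ∧
      0 < ζ - kt + 1 ∧
      Tendsto A (𝓝[>] 0) (𝓝 0) := by
  have hζ₀ : 0 < ζ := hζ ▸ Real.sqrt_pos.2 (by positivity)
  have hexp : 0 < ζ - kt + 1 := by linarith [hζ ▸ lt_sqrt_one_add_three_mul_sq kt]
  set C := 4 * Real.pi * ζ ^ 2 * rs ^ 2
  have hdiv : Tendsto (fun ρ : ℝ => ρ / rs) (𝓝[>] 0) (𝓝 0) :=
    ((continuous_id.div_const rs).tendsto' 0 0 (zero_div rs)).mono_left nhdsWithin_le_nhds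
  have hprofile : Tendsto (fun ρ : ℝ => C * ((1 - ρ / rs) ^ (ζ + kt - 1) /
      ((ρ / rs) ^ ζ + (1 - ρ / rs) ^ ζ) ^ 2)) (𝓝[>] 0) (𝓝 C) := by
    have h := (continuousAt_rpow_div_sq_rpow_add_rpow (a := ζ + kt - 1) hζ₀).tendsto.comp hdiv
    simpa [Real.zero_rpow hζ₀.ne'] using h.const_mul C
  have hlim : Tendsto (fun ρ : ℝ => A ρ * (rs / ρ) ^ (ζ - kt + 1)) (𝓝[>] 0) (𝓝 C) := by
    refine hprofile.congr' ?_
    filter_upwards [Ioo_mem_nhdsGT hrs] with ρ ⟨hρ₀, hρrs⟩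
    rw [hA ρ hρ₀ hρrs.ne, ← inv_div ρ rs, mul_div_assoc', surfaceArea_mul_rpow_inv_eq
      (div_pos hρ₀ hrs) ((div_lt_one hrs).2 hρrs) _ _ _ _ (by ring)]
  exact ⟨hlim, hexp, tendsto_nhdsGT_zero_of_tendsto_mul_div_rpow hrs hexp hlim⟩
end

section
/- Large-distance expansion of the surface area: lim_{ρ→+∞} [ A(ρ) − 4π(ρ² − k̃ r_s ρ) ] = π r_s² k̃ (k̃ − 2). -/
/-!
Put `x = -r_s/ρ`, so that `x → 0` and `1 - r_s/ρ = 1 + x > 0`. Then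
`A/(4π r_s²) = P(x) / (x u(x))²` with `P(x) = (1+x)^(ζ+k̃-1)` and `u(x) = ((1+x)^ζ - 1)/(ζ x)`, and
the binomial series gives second-order expansions `P = 1 + (ζ+k̃-1) x + c x² + o(x²)` and
`u = 1 + (ζ-1)/2 x + b x² + o(x²)`. Since `ζ + k̃ - 1 = 2 (ζ-1)/2 + k̃`, the polar part of
`P/(x u)²` is exactly `1/x² + k̃/x = (ρ² - k̃ r_s ρ)/r_s²`, and its constant term reduces to
`k̃(k̃-2)/4` by `ζ² = 1 + 3k̃²`.
-/

open Real Filter Topology Asymptotics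

theorem Ring.choose_two_eq {K : Type*} [Field K] [CharZero K] (a : K) :
    Ring.choose a 2 = a * (a - 1) / 2 := by
  rw [Ring.choose_eq_smul, Polynomial.descPochhammer_smeval_eq_ascPochhammer,
    Polynomial.ascPochhammer_smeval_eq_eval]
  simp [ascPochhammer_succ_right, Nat.factorial]
  ring

theorem Ring.choose_three_eq {K : Type*} [Field K] [CharZero K] (a : K) :
    Ring.choose a 3 = a * (a - 1) * (a - 2) / 6 := by
  rw [Ring.choose_eq_smul, Polynomial.descPochhammer_smeval_eq_ascPochhammer,
    Polynomial.ascPochhammer_smeval_eq_eval]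
  simp [ascPochhammer_succ_right, Nat.factorial]
  ring

namespace Real

theorem tendsto_one_add_rpow_sub_sum_div_pow (a : ℝ) (n : ℕ) :
    Tendsto (fun x : ℝ ↦ ((1 + x) ^ a - ∑ k ∈ Finset.range (n + 1), Ring.choose a k * x ^ k) /
      x ^ (n + 1)) (𝓝[≠] 0) (𝓝 (Ring.choose a (n + 1))) := by
  have hO := (one_add_rpow_hasFPowerSeriesAt_zero (a := a)).isBigO_sub_partialSum_pow (n + 2)
  simp only [zero_add, FormalMultilinearSeries.partialSum, binomialSeries,
    FormalMultilinearSeries.ofScalars_apply_eq, smul_eq_mul] at hO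
  have ho : (fun x : ℝ ↦ (1 + x) ^ a - ∑ k ∈ Finset.range (n + 2), Ring.choose a k * x ^ k)
      =o[𝓝[≠] 0] fun x : ℝ ↦ x ^ (n + 1) := by
    refine (hO.trans_isLittleO ?_).mono nhdsWithin_le_nhds
    simpa using isLittleO_norm_left.mpr (isLittleO_pow_pow (𝕜 := ℝ) (Nat.lt_succ_self (n + 1)))
  refine (zero_add (Ring.choose a (n + 1)) ▸ ho.tendsto_div_nhds_zero.add_const _).congr' ?_
  filter_upwards [self_mem_nhdsWithin] with x (hx : x ≠ 0)
  rw [Finset.sum_range_succ _ (n + 1)]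
  field_simp
  ring

theorem tendsto_one_add_rpow_sub_linear_div_sq (a : ℝ) :
    Tendsto (fun x : ℝ ↦ ((1 + x) ^ a - 1 - a * x) / x ^ 2) (𝓝[≠] 0) (𝓝 (a * (a - 1) / 2)) := by
  simpa [Finset.sum_range_succ, Ring.choose_two_eq, sub_sub] using
    tendsto_one_add_rpow_sub_sum_div_pow a 1

theorem tendsto_one_add_rpow_sub_one_div_mul_sub_linear_div_sq {a : ℝ} (ha : a ≠ 0) :
    Tendsto (fun x : ℝ ↦ (((1 + x) ^ a - 1) / (a * x) - 1 - (a - 1) / 2 * x) / x ^ 2) (𝓝[≠] 0)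
      (𝓝 ((a - 1) * (a - 2) / 6)) := by
  have h := (tendsto_one_add_rpow_sub_sum_div_pow a 2).div_const a
  rw [Ring.choose_three_eq, mul_assoc, mul_div_assoc, mul_div_cancel_left₀ _ ha] at h
  refine h.congr' ?_
  filter_upwards [self_mem_nhdsWithin] with x (hx : x ≠ 0)
  simp [Finset.sum_range_succ, Ring.choose_two_eq]
  field_simp
  ring

end Real

theorem tendsto_div_mul_sq_sub_principal_part {P u : ℝ → ℝ} {p a k c b : ℝ}
    (hp : p = 2 * a + k)
    (hP : Tendsto (fun x ↦ (P x - 1 - p * x) / x ^ 2) (𝓝[≠] 0) (𝓝 c))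
    (hu : Tendsto (fun x ↦ (u x - 1 - a * x) / x ^ 2) (𝓝[≠] 0) (𝓝 b)) :
    Tendsto (fun x ↦ P x / (x * u x) ^ 2 - (1 / x ^ 2 + k / x)) (𝓝[≠] 0)
      (𝓝 (c - 2 * b - a ^ 2 - 2 * k * a)) := by
  set R := fun x ↦ (P x - 1 - p * x) / x ^ 2
  set U := fun x ↦ (u x - 1 - a * x) / x ^ 2
  have hx : Tendsto (fun x : ℝ ↦ x) (𝓝[≠] 0) (𝓝 0) := nhdsWithin_le_nhds
  have hv : Tendsto (fun x ↦ a + x * U x) (𝓝[≠] 0) (𝓝 a) := by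
    simpa using tendsto_const_nhds.add (hx.mul hu)
  have hu1 : Tendsto (fun x ↦ 1 + x * (a + x * U x)) (𝓝[≠] 0) (𝓝 1) := by
    simpa using tendsto_const_nhds.add (hx.mul hv)
  have hlim : Tendsto (fun x ↦ (R x - 2 * U x - (a + x * U x) ^ 2 - 2 * k * (a + x * U x)
      - k * x * (a + x * U x) ^ 2) / (1 + x * (a + x * U x)) ^ 2) (𝓝[≠] 0)
      (𝓝 (c - 2 * b - a ^ 2 - 2 * k * a)) := by
    simpa [Pi.div_def] using ((((hP.sub (hu.const_mul 2)).sub (hv.pow 2)).sub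
      (hv.const_mul (2 * k))).sub ((hx.const_mul k).mul (hv.pow 2))).div (hu1.pow 2) (by norm_num)
  refine hlim.congr' ?_
  filter_upwards [self_mem_nhdsWithin, hu1.eventually_ne one_ne_zero] with x (hx : x ≠ 0) hux
  have hPx : P x = 1 + p * x + x ^ 2 * R x := by simp only [R]; field_simp; ring
  have hux' : u x = 1 + x * (a + x * U x) := by simp only [U]; field_simp; ring
  -- `p = 2 * a + k` is what cancels the `1 / x` terms
  rw [hPx, hux', hp]
  generalize R x = r, U x = w at hux ⊢
  symm
  field_simp
  ring

/-- Large-distance expansion of the surface area: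
`lim_{ρ→+∞} [A(ρ) − 4π(ρ² − k̃ r_s ρ)] = π r_s² k̃ (k̃ − 2)`. -/
theorem surface_area_large_distance
    (rs kt : ℝ) (hrs : 0 < rs)
    (ζ : ℝ) (hζ : ζ = Real.sqrt (1 + 3 * kt ^ 2))
    (A : ℝ → ℝ)
    (hA : ∀ ρ : ℝ, 0 < ρ → ρ ≠ rs → A ρ =
      4 * Real.pi * ζ ^ 2 * rs ^ 2 * |1 - rs / ρ| ^ (ζ + kt - 1) /
        (1 - Real.sign (1 - rs / ρ) * |1 - rs / ρ| ^ ζ) ^ 2) :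
    Tendsto (fun ρ : ℝ => A ρ - 4 * Real.pi * (ρ ^ 2 - kt * rs * ρ)) atTop
      (𝓝 (Real.pi * rs ^ 2 * kt * (kt - 2))) := by
  have hζ2 : ζ ^ 2 = 1 + 3 * kt ^ 2 := hζ ▸ sq_sqrt (by positivity)
  have hζ0 : ζ ≠ 0 := hζ ▸ (sqrt_pos.mpr (by positivity)).ne'
  have hlim := tendsto_div_mul_sq_sub_principal_part (k := kt) (by ring)
    (tendsto_one_add_rpow_sub_linear_div_sq (ζ + kt - 1))
    (tendsto_one_add_rpow_sub_one_div_mul_sub_linear_div_sq hζ0)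
  have hx : Tendsto (fun ρ : ℝ ↦ -rs / ρ) atTop (𝓝[≠] 0) :=
    tendsto_nhdsWithin_iff.mpr ⟨tendsto_const_nhds.div_atTop tendsto_id,
      (eventually_gt_atTop 0).mono fun ρ hρ ↦ div_ne_zero (neg_ne_zero.mpr hrs.ne') hρ.ne'⟩
  have hval : 4 * π * rs ^ 2 * ((ζ + kt - 1) * (ζ + kt - 1 - 1) / 2
      - 2 * ((ζ - 1) * (ζ - 2) / 6) - ((ζ - 1) / 2) ^ 2 - 2 * kt * ((ζ - 1) / 2))
      = π * rs ^ 2 * kt * (kt - 2) := by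
    linear_combination (-(π * rs ^ 2) / 3) * hζ2
  refine hval ▸ ((hlim.comp hx).const_mul (4 * π * rs ^ 2)).congr' ?_
  filter_upwards [eventually_gt_atTop rs] with ρ hρ
  have hρ0 : 0 < ρ := hrs.trans hρ
  have hpos : 0 < 1 - rs / ρ := sub_pos.mpr ((div_lt_one hρ0).mpr hρ)
  rw [Function.comp_apply, hA ρ hρ0 hρ.ne', sign_of_pos hpos, abs_of_pos hpos, one_mul,
    neg_div, ← sub_eq_add_neg]
  generalize (1 - rs / ρ) ^ ζ = E
  have hxu : -(rs / ρ) * ((E - 1) / (ζ * -(rs / ρ))) = (E - 1) / ζ := by field_simp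
  rw [hxu, div_pow, div_div_eq_mul_div, show (1 - E) ^ 2 = (E - 1) ^ 2 by ring]
  field_simp
  ring
end

section
/- Positivity of the Kretschmann invariant: for every k̃ ∈ ℝ and every ρ ∈ (0, ∞) with ρ ≠ r_s, the Kretschmann function satisfies K(ρ) > 0; equivalently, for every s ∈ {−1, +1} and every u > 0, the bracket 4k̃²(k̃+1)·s·u + ζ(4k̃³ − 5k̃² − 3)(1 − u²) + (9k̃⁴ − 2k̃³ + 10k̃² + 3)(1 + u²) is strictly positive. -/
open Real

/-!
With `D`, `E` the coefficients of `1 + u²` and `ζ(1 - u²)`, the bracket is the quadratic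
`a u² + b u + c` with `a = D - ζE`, `b = 4k²(k+1)s`, `c = D + ζE`. Then `a + c = 2D > 0`, and
`ζ² = 1 + 3k²` gives `ac = k²(k+1)² P` for a quartic `P > 4k²`, so `b² - 4ac < 0` unless
`k(k+1) = 0`. In that case `b = 0` and `ac = 0`, so the bracket is `a u²` or `c` with a positive
coefficient. The other factors of `K` are manifestly positive, `1 - sgn(x)|x|^ζ` because `x < 1`.
-/

theorem quadratic_pos_of_discrim_neg {K : Type*} [Field K] [LinearOrder K] [IsStrictOrderedRing K]
    {a b c : K} (ha : 0 < a) (h : discrim a b c < 0) (x : K) :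
    0 < a * (x * x) + b * x + c := by
  rw [discrim] at h
  nlinarith [sq_nonneg (2 * a * x + b)]

lemma kretschmann_bracket_pos {k ζ s u : ℝ} (hζ : ζ ^ 2 = 1 + 3 * k ^ 2) (hs : s ^ 2 ≤ 1)
    (hu : u ≠ 0) :
    0 < 4 * k ^ 2 * (k + 1) * s * u + ζ * (4 * k ^ 3 - 5 * k ^ 2 - 3) * (1 - u ^ 2) +
      (9 * k ^ 4 - 2 * k ^ 3 + 10 * k ^ 2 + 3) * (1 + u ^ 2) := by
  set D := 9 * k ^ 4 - 2 * k ^ 3 + 10 * k ^ 2 + 3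
  set E := 4 * k ^ 3 - 5 * k ^ 2 - 3
  set P := 33 * k ^ 4 + 18 * k ^ 3 + 24 * k ^ 2 + 6 * k + 3
  have hD : 0 < D := by nlinarith [sq_nonneg (3 * k ^ 2 - k), sq_nonneg k]
  have hP : 4 * k ^ 2 < P := by
    nlinarith [sq_nonneg (3 * k ^ 2 + k), sq_nonneg (k + 1), sq_nonneg k]
  have hac : (D - ζ * E) * (D + ζ * E) = (k * (k + 1)) ^ 2 * P := by
    linear_combination (-E ^ 2) * hζ
  rw [show 4 * k ^ 2 * (k + 1) * s * u + ζ * E * (1 - u ^ 2) + D * (1 + u ^ 2) =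
    (D - ζ * E) * (u * u) + 4 * k ^ 2 * (k + 1) * s * u + (D + ζ * E) by ring]
  rcases eq_or_ne (k * (k + 1)) 0 with hk | hk
  · have hb : 4 * k ^ 2 * (k + 1) * s = 0 := by linear_combination (4 * k * s) * hk
    rw [hk, zero_pow two_ne_zero, zero_mul] at hac
    rw [hb, zero_mul, add_zero]
    rcases mul_eq_zero.1 hac with ha | hc
    · rw [ha]; linarith
    · rw [hc, add_zero]
      exact mul_pos (by linarith) (mul_self_pos.2 hu)
  · have hkP : 0 < (k * (k + 1)) ^ 2 * P := mul_pos (sq_pos_of_ne_zero hk) (by nlinarith)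
    refine quadratic_pos_of_discrim_neg ?_ ?_ u
    · nlinarith
    · rw [discrim, mul_assoc 4 (D - ζ * E), hac]
      nlinarith [mul_le_mul_of_nonneg_left hs (sq_nonneg (4 * k * (k * (k + 1))))]

lemma one_sub_sign_mul_abs_rpow_pos {x ζ : ℝ} (hζ : 0 < ζ) (hx : x < 1) :
    0 < 1 - Real.sign x * |x| ^ ζ := by
  rcases lt_trichotomy x 0 with hneg | rfl | hpos
  · rw [Real.sign_of_neg hneg]
    linarith [rpow_pos_of_pos (abs_pos.2 hneg.ne) ζ]
  · simp
  · rw [Real.sign_of_pos hpos, abs_of_pos hpos]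
    linarith [rpow_lt_one hpos.le hx hζ]

lemma kretschmann_formula_pos {k ζ r x p : ℝ} (hζ0 : 0 < ζ) (hζ : ζ ^ 2 = 1 + 3 * k ^ 2)
    (hr : r ≠ 0) (hx0 : x ≠ 0) (hx1 : x < 1) :
    0 < 2 / (ζ ^ 8 * r ^ 4) * (1 - Real.sign x * |x| ^ ζ) ^ 6 * |x| ^ p *
      (4 * k ^ 2 * (k + 1) * Real.sign x * |x| ^ ζ +
        ζ * (4 * k ^ 3 - 5 * k ^ 2 - 3) * (1 - |x| ^ (2 * ζ)) +
        (9 * k ^ 4 - 2 * k ^ 3 + 10 * k ^ 2 + 3) * (1 + |x| ^ (2 * ζ))) := by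
  have habs : 0 < |x| := abs_pos.2 hx0
  have hsign : Real.sign x ^ 2 ≤ 1 := by
    rcases Real.sign_apply_eq_of_ne_zero x hx0 with h | h <;> norm_num [h]
  rw [mul_comm 2 ζ, rpow_mul habs.le, rpow_two]
  have hbase := one_sub_sign_mul_abs_rpow_pos hζ0 hx1
  have hbracket := kretschmann_bracket_pos hζ hsign (rpow_pos_of_pos habs ζ).ne'
  have hpow := rpow_pos_of_pos habs p
  positivity

/-- Positivity of the Kretschmann invariant: `K(ρ) > 0` for all `ρ ∈ (0,∞)`, `ρ ≠ r_s`;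
equivalently the bracket is strictly positive for every sign `s ∈ {−1,+1}` and `u > 0`. -/
theorem kretschmann_positivity
    (rs kt : ℝ) (hrs : 0 < rs)
    (ζ : ℝ) (hζ : ζ = Real.sqrt (1 + 3 * kt ^ 2))
    (K : ℝ → ℝ)
    (hK : ∀ ρ : ℝ, 0 < ρ → ρ ≠ rs → K ρ =
      (2 / (ζ ^ 8 * rs ^ 4)) *
        (1 - Real.sign (1 - rs / ρ) * |1 - rs / ρ| ^ ζ) ^ 6 *
        |1 - rs / ρ| ^ (2 - 4 * ζ - 2 * kt) *
        (4 * kt ^ 2 * (kt + 1) * Real.sign (1 - rs / ρ) * |1 - rs / ρ| ^ ζ +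
          ζ * (4 * kt ^ 3 - 5 * kt ^ 2 - 3) * (1 - |1 - rs / ρ| ^ (2 * ζ)) +
          (9 * kt ^ 4 - 2 * kt ^ 3 + 10 * kt ^ 2 + 3) * (1 + |1 - rs / ρ| ^ (2 * ζ)))) :
    (∀ ρ : ℝ, 0 < ρ → ρ ≠ rs → 0 < K ρ) ∧
      (∀ s : ℝ, s = -1 ∨ s = 1 → ∀ u : ℝ, 0 < u →
        0 < 4 * kt ^ 2 * (kt + 1) * s * u +
          ζ * (4 * kt ^ 3 - 5 * kt ^ 2 - 3) * (1 - u ^ 2) +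
          (9 * kt ^ 4 - 2 * kt ^ 3 + 10 * kt ^ 2 + 3) * (1 + u ^ 2)) := by
  have hζ0 : 0 < ζ := hζ ▸ sqrt_pos.2 (by positivity)
  have hζ2 : ζ ^ 2 = 1 + 3 * kt ^ 2 := hζ ▸ sq_sqrt (by positivity)
  refine ⟨fun ρ hρ hne => ?_, fun s hs u hu => ?_⟩
  · have hx0 : 1 - rs / ρ ≠ 0 :=
      sub_ne_zero.2 fun h => hne ((div_eq_one_iff_eq hρ.ne').1 h.symm).symm
    rw [hK ρ hρ hne]
    exact kretschmann_formula_pos hζ0 hζ2 hrs.ne' hx0 (sub_lt_self 1 (div_pos hrs hρ))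
  · exact kretschmann_bracket_pos hζ2 (by rcases hs with rfl | rfl <;> norm_num) hu.ne'
end

section
/- Large-distance asymptotic of the Kretschmann invariant: for every k̃ ∈ ℝ, lim_{ρ→+∞} ρ⁶ · K(ρ) = 12 (k̃² + 1) r_s². -/
/-!
For `ρ > r_s` we have `x = 1 - r_s/ρ ∈ (0, 1)`, so the signs and absolute values in `K` disappear.
As `ρ → ∞`, `x → 1` and `ρ (1 - x^ζ) → ζ r_s` (the derivative of `t ↦ (1 - r_s t)^ζ` at `0`), hence
`ρ⁶ K(ρ) → 2/(ζ⁸ r_s⁴) · (ζ r_s)⁶ · B(1)`, where the bracket at `x = 1` is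
`B(1) = 6 (3k̃² + 1)(k̃² + 1) = 6 ζ² (k̃² + 1)`.
-/

open Real Filter Topology

theorem hasDerivAt_one_sub_mul_rpow (c p : ℝ) :
    HasDerivAt (fun t : ℝ => (1 - c * t) ^ p) (-(p * c)) 0 := by
  have hinner : HasDerivAt (fun t : ℝ => 1 - c * t) (-c) 0 := by
    simpa using ((hasDerivAt_id (0 : ℝ)).const_mul c).const_sub 1
  convert hinner.rpow_const (p := p) (Or.inl (by simp)) using 1
  simp only [mul_zero, sub_zero, one_rpow]
  ring

theorem tendsto_mul_one_sub_rpow_one_sub_div (c p : ℝ) :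
    Tendsto (fun ρ : ℝ => ρ * (1 - (1 - c / ρ) ^ p)) atTop (𝓝 (p * c)) := by
  have hslope := (hasDerivAt_iff_tendsto_slope.mp (hasDerivAt_one_sub_mul_rpow c p)).comp
    (tendsto_inv_atTop_nhdsGT_zero.mono_right (nhdsWithin_mono _ fun t ht => ne_of_gt ht))
  rw [← neg_neg (p * c)]
  refine hslope.neg.congr' ?_
  filter_upwards [eventually_gt_atTop 0] with ρ hρ
  simp only [Function.comp_apply, slope_def_field, mul_zero, sub_zero, one_rpow]
  field_simp
  ring

theorem tendsto_rpow_one_sub_div (c e : ℝ) :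
    Tendsto (fun ρ : ℝ => (1 - c / ρ) ^ e) atTop (𝓝 1) := by
  have hx : Tendsto (fun ρ : ℝ => 1 - c / ρ) atTop (𝓝 1) := by
    simpa using tendsto_const_nhds.sub ((tendsto_const_nhds (x := c)).div_atTop tendsto_id)
  simpa using hx.rpow_const (p := e) (Or.inl one_ne_zero)

/-- Large-distance asymptotic of the Kretschmann invariant:
`lim_{ρ→+∞} ρ⁶·K(ρ) = 12 (k̃² + 1) r_s²`. -/
theorem kretschmann_large_distance
    (rs kt : ℝ) (hrs : 0 < rs)
    (ζ : ℝ) (hζ : ζ = Real.sqrt (1 + 3 * kt ^ 2))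
    (K : ℝ → ℝ)
    (hK : ∀ ρ : ℝ, 0 < ρ → ρ ≠ rs → K ρ =
      (2 / (ζ ^ 8 * rs ^ 4)) *
        (1 - Real.sign (1 - rs / ρ) * |1 - rs / ρ| ^ ζ) ^ 6 *
        |1 - rs / ρ| ^ (2 - 4 * ζ - 2 * kt) *
        (4 * kt ^ 2 * (kt + 1) * Real.sign (1 - rs / ρ) * |1 - rs / ρ| ^ ζ +
          ζ * (4 * kt ^ 3 - 5 * kt ^ 2 - 3) * (1 - |1 - rs / ρ| ^ (2 * ζ)) +
          (9 * kt ^ 4 - 2 * kt ^ 3 + 10 * kt ^ 2 + 3) * (1 + |1 - rs / ρ| ^ (2 * ζ)))) :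
    Tendsto (fun ρ : ℝ => ρ ^ 6 * K ρ) atTop (𝓝 (12 * (kt ^ 2 + 1) * rs ^ 2)) := by
  have hζsq : ζ ^ 2 = 1 + 3 * kt ^ 2 := by rw [hζ, sq_sqrt (by positivity)]
  have hζ0 : ζ ≠ 0 := by rw [hζ]; positivity
  set a := 4 * kt ^ 2 * (kt + 1)
  set b := ζ * (4 * kt ^ 3 - 5 * kt ^ 2 - 3)
  set d := 9 * kt ^ 4 - 2 * kt ^ 3 + 10 * kt ^ 2 + 3
  refine Tendsto.congr' (f₁ := fun ρ : ℝ => 2 / (ζ ^ 8 * rs ^ 4) * (ρ * (1 - (1 - rs / ρ) ^ ζ)) ^ 6 *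
      (1 - rs / ρ) ^ (2 - 4 * ζ - 2 * kt) * (a * (1 - rs / ρ) ^ ζ +
        b * (1 - (1 - rs / ρ) ^ (2 * ζ)) + d * (1 + (1 - rs / ρ) ^ (2 * ζ)))) ?_ ?_
  · filter_upwards [eventually_gt_atTop rs] with ρ hρ
    have hx : 0 < 1 - rs / ρ := sub_pos.mpr ((div_lt_one (hrs.trans hρ)).mpr hρ)
    rw [hK ρ (hrs.trans hρ) hρ.ne', Real.sign_of_pos hx, abs_of_pos hx]
    ring
  · have hpow := tendsto_rpow_one_sub_div rs
    convert ((tendsto_const_nhds.mul ((tendsto_mul_one_sub_rpow_one_sub_div rs ζ).pow 6)).mul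
      (hpow _)).mul (((tendsto_const_nhds.mul (hpow ζ)).add
        (tendsto_const_nhds.mul (tendsto_const_nhds.sub (hpow _)))).add
          (tendsto_const_nhds.mul (tendsto_const_nhds.add (hpow _)))) using 2
    field_simp
    linear_combination 12 * (kt ^ 2 + 1) * hζsq
end

section
/- Singularity at the origin: for every k̃ ∈ ℝ, lim_{ρ→0⁺} (ρ/r_s)^{2(2ζ − k̃ + 1)} · K(ρ) = (2/(ζ⁸ r_s⁴)) · [ ζ(−4k̃³ + 5k̃² + 3) + (9k̃⁴ − 2k̃³ + 10k̃² + 3) ]; since 2ζ − k̃ + 1 > 0 for all k̃ ∈ ℝ, the Kretschmann function K diverges to +∞ as ρ → 0⁺ whenever this constant is positive. -/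
/-!
For `0 < ρ < r_s` the variable `x = 1 - r_s/ρ` is negative with `|x| = (r_s - ρ)/ρ`. Pulling the
dominant power `|x|^{2(2ζ - k̃ + 1)}` out of `K` leaves a polynomial in `w = (ρ/(r_s - ρ))^ζ`
times `((r_s - ρ)/r_s)^{2(2ζ - k̃ + 1)}`, and `(ρ/r_s)^{2(2ζ - k̃ + 1)} · |x|^{2(2ζ - k̃ + 1)}` is
exactly that last factor. Everything is then continuous at `ρ = 0`, where `w = 0`. Divergence
follows by dividing by `(ρ/r_s)^{2(2ζ - k̃ + 1)} → 0⁺`.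
-/

open Real Filter Topology

lemma two_mul_sqrt_one_add_three_mul_sq_sub_add_one_pos (k : ℝ) :
    0 < 2 * √(1 + 3 * k ^ 2) - k + 1 := by
  have hk : k ≤ √(1 + 3 * k ^ 2) :=
    (le_abs_self k).trans (sqrt_sq_eq_abs k ▸ sqrt_le_sqrt (by nlinarith))
  linarith [sqrt_nonneg (1 + 3 * k ^ 2)]

lemma tendsto_atTop_of_mul_tendsto_pos {α : Type*} {l : Filter α} {f h : α → ℝ} {L : ℝ}
    (hL : 0 < L) (hfh : Tendsto (fun x ↦ h x * f x) l (𝓝 L)) (hh : Tendsto h l (𝓝[>] 0)) :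
    Tendsto f l atTop := by
  refine (Tendsto.pos_mul_atTop hL hfh hh.inv_tendsto_nhdsGT_zero).congr' ?_
  filter_upwards [hh self_mem_nhdsWithin] with x (hx : 0 < h x)
  rw [Pi.inv_apply, mul_comm, inv_mul_cancel_left₀ hx.ne']

lemma tendsto_div_rpow_nhdsGT_zero {c e : ℝ} (hc : 0 < c) (he : 0 < e) :
    Tendsto (fun ρ : ℝ ↦ (ρ / c) ^ e) (𝓝[>] 0) (𝓝[>] 0) := by
  refine tendsto_nhdsWithin_iff.mpr ⟨?_, ?_⟩
  · have : ContinuousAt (fun ρ : ℝ ↦ (ρ / c) ^ e) 0 := by fun_prop (disch := exact Or.inr he.le)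
    simpa [zero_rpow he.ne'] using this.tendsto.mono_left nhdsWithin_le_nhds
  · filter_upwards [self_mem_nhdsWithin] with ρ (hρ : 0 < ρ)
    exact rpow_pos_of_pos (div_pos hρ hc) e

lemma rescaled_kretschmann_eq {rs ρ : ℝ} (hρ : 0 < ρ) (hρrs : ρ < rs) (C ζ kt a b d : ℝ) :
    (ρ / rs) ^ (2 * (2 * ζ - kt + 1)) *
      (C * (1 - Real.sign (1 - rs / ρ) * |1 - rs / ρ| ^ ζ) ^ 6 *
        |1 - rs / ρ| ^ (2 - 4 * ζ - 2 * kt) *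
        (a * Real.sign (1 - rs / ρ) * |1 - rs / ρ| ^ ζ + b * (1 - |1 - rs / ρ| ^ (2 * ζ)) +
          d * (1 + |1 - rs / ρ| ^ (2 * ζ)))) =
    C * ((rs - ρ) / rs) ^ (2 * (2 * ζ - kt + 1)) * ((ρ / (rs - ρ)) ^ ζ + 1) ^ 6 *
      (-a * (ρ / (rs - ρ)) ^ ζ + b * (((ρ / (rs - ρ)) ^ ζ) ^ 2 - 1) +
        d * (((ρ / (rs - ρ)) ^ ζ) ^ 2 + 1)) := by
  have hx : 1 - rs / ρ < 0 := by
    have : 1 < rs / ρ := (one_lt_div hρ).mpr hρrs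
    linarith
  set t := ρ / (rs - ρ)
  have ht : 0 < t := div_pos hρ (by linarith)
  have habs : |1 - rs / ρ| = t⁻¹ := by
    rw [abs_of_neg hx, inv_div]
    field_simp
    ring
  set e := 2 * (2 * ζ - kt + 1)
  have h2ζ : (t⁻¹) ^ (2 * ζ) = ((t ^ ζ) ^ 2)⁻¹ := by
    rw [inv_rpow ht.le, mul_comm, rpow_mul ht.le, rpow_two]
  have hexp : (t⁻¹) ^ (2 - 4 * ζ - 2 * kt) = (t⁻¹) ^ e * (t ^ ζ) ^ 8 := by
    rw [inv_rpow ht.le, inv_rpow ht.le, ← rpow_natCast, ← rpow_mul ht.le, ← rpow_neg ht.le,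
      ← rpow_neg ht.le, ← rpow_add ht]
    congr 1
    push_cast
    ring
  have hscale : (ρ / rs) ^ e * (t⁻¹) ^ e = ((rs - ρ) / rs) ^ e := by
    rw [← mul_rpow (div_pos hρ (by linarith)).le (inv_pos.mpr ht).le, inv_div]
    congr 1
    field_simp
  rw [sign_of_neg hx, habs, hexp, h2ζ, inv_rpow ht.le, ← hscale]
  field_simp
  ring

lemma tendsto_rescaled_kretschmann {rs : ℝ} (hrs : 0 < rs) {ζ : ℝ} (hζ : 0 < ζ)
    (C e a b d : ℝ) :
    Tendsto (fun ρ : ℝ ↦ C * ((rs - ρ) / rs) ^ e * ((ρ / (rs - ρ)) ^ ζ + 1) ^ 6 *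
      (-a * (ρ / (rs - ρ)) ^ ζ + b * (((ρ / (rs - ρ)) ^ ζ) ^ 2 - 1) +
        d * (((ρ / (rs - ρ)) ^ ζ) ^ 2 + 1))) (𝓝 0) (𝓝 (C * (d - b))) := by
  have hcont : ContinuousAt (fun ρ : ℝ ↦ C * ((rs - ρ) / rs) ^ e * ((ρ / (rs - ρ)) ^ ζ + 1) ^ 6 *
      (-a * (ρ / (rs - ρ)) ^ ζ + b * (((ρ / (rs - ρ)) ^ ζ) ^ 2 - 1) +
        d * (((ρ / (rs - ρ)) ^ ζ) ^ 2 + 1))) 0 := by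
    fun_prop (disch := first | exact Or.inr hζ.le | simp [hrs.ne'])
  convert hcont.tendsto using 2
  simp [hrs.ne', zero_rpow hζ.ne', sub_eq_neg_add]

/-- Singularity at the origin: `lim_{ρ→0⁺} (ρ/r_s)^{2(2ζ − k̃ + 1)}·K(ρ)` equals
`(2/(ζ⁸ r_s⁴))·[ζ(−4k̃³ + 5k̃² + 3) + (9k̃⁴ − 2k̃³ + 10k̃² + 3)]`; since `2ζ − k̃ + 1 > 0`,
`K` diverges to `+∞` as `ρ → 0⁺` whenever this constant is positive. -/
theorem kretschmann_origin_singularity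
    (rs kt : ℝ) (hrs : 0 < rs)
    (ζ : ℝ) (hζ : ζ = Real.sqrt (1 + 3 * kt ^ 2))
    (K : ℝ → ℝ)
    (hK : ∀ ρ : ℝ, 0 < ρ → ρ ≠ rs → K ρ =
      (2 / (ζ ^ 8 * rs ^ 4)) *
        (1 - Real.sign (1 - rs / ρ) * |1 - rs / ρ| ^ ζ) ^ 6 *
        |1 - rs / ρ| ^ (2 - 4 * ζ - 2 * kt) *
        (4 * kt ^ 2 * (kt + 1) * Real.sign (1 - rs / ρ) * |1 - rs / ρ| ^ ζ +
          ζ * (4 * kt ^ 3 - 5 * kt ^ 2 - 3) * (1 - |1 - rs / ρ| ^ (2 * ζ)) +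
          (9 * kt ^ 4 - 2 * kt ^ 3 + 10 * kt ^ 2 + 3) * (1 + |1 - rs / ρ| ^ (2 * ζ)))) :
    Tendsto (fun ρ : ℝ => (ρ / rs) ^ (2 * (2 * ζ - kt + 1)) * K ρ) (𝓝[>] 0)
        (𝓝 ((2 / (ζ ^ 8 * rs ^ 4)) *
          (ζ * (-4 * kt ^ 3 + 5 * kt ^ 2 + 3) +
            (9 * kt ^ 4 - 2 * kt ^ 3 + 10 * kt ^ 2 + 3)))) ∧
      0 < 2 * ζ - kt + 1 ∧
      (0 < (2 / (ζ ^ 8 * rs ^ 4)) *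
          (ζ * (-4 * kt ^ 3 + 5 * kt ^ 2 + 3) +
            (9 * kt ^ 4 - 2 * kt ^ 3 + 10 * kt ^ 2 + 3)) →
        Tendsto K (𝓝[>] 0) atTop) := by
  have hζ0 : 0 < ζ := hζ ▸ sqrt_pos.mpr (by positivity)
  have hlim : Tendsto (fun ρ : ℝ => (ρ / rs) ^ (2 * (2 * ζ - kt + 1)) * K ρ) (𝓝[>] 0)
      (𝓝 ((2 / (ζ ^ 8 * rs ^ 4)) * (ζ * (-4 * kt ^ 3 + 5 * kt ^ 2 + 3) +
        (9 * kt ^ 4 - 2 * kt ^ 3 + 10 * kt ^ 2 + 3)))) := by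
    convert ((tendsto_rescaled_kretschmann hrs hζ0 (2 / (ζ ^ 8 * rs ^ 4))
      (2 * (2 * ζ - kt + 1)) (4 * kt ^ 2 * (kt + 1)) (ζ * (4 * kt ^ 3 - 5 * kt ^ 2 - 3))
      (9 * kt ^ 4 - 2 * kt ^ 3 + 10 * kt ^ 2 + 3)).mono_left nhdsWithin_le_nhds).congr' ?_
      using 2
    · ring
    · filter_upwards [Ioo_mem_nhdsGT hrs] with ρ ⟨hρ, hρrs⟩
      rw [hK ρ hρ hρrs.ne, rescaled_kretschmann_eq hρ hρrs]
  have he : 0 < 2 * ζ - kt + 1 := hζ ▸ two_mul_sqrt_one_add_three_mul_sq_sub_add_one_pos kt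
  exact ⟨hlim, he, fun hL ↦ tendsto_atTop_of_mul_tendsto_pos hL hlim
    (tendsto_div_rpow_nhdsGT_zero hrs (by positivity))⟩
end

section
/- ζ-tortoise coordinate as a convergent series: let ζ > 1 and r_s > 0. For every z ∈ (0, 1), the series F(z) := ζ r_s · Σ_{n=0}^{∞} ((n+1)/(n + 1 − 1/ζ)) · z^{n + 1 − 1/ζ} converges, and F is differentiable at z with derivative F'(z) = ζ r_s · z^{−1/ζ} / (1 − z)². -/
/-!
Termwise, `d/dx [(n+1)/(n+1-s) · x^(n+1-s)] = x^(-s) · (n+1) xⁿ` with `s = 1/ζ`, and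
`∑ (n+1) xⁿ = 1/(1-x)²`. On an interval `(a, b) ∋ z` with `0 < a < b < 1` these derivatives are
dominated by the summable `a^(-s) (n+1) bⁿ`, so the series may be differentiated term by term.
-/

open Real Filter Topology

theorem hasSum_coe_add_one_mul_geometric_of_norm_lt_one {𝕜 : Type*} [NormedDivisionRing 𝕜]
    [HasSummableGeomSeries 𝕜] {r : 𝕜} (hr : ‖r‖ < 1) :
    HasSum (fun n : ℕ => ((n : 𝕜) + 1) * r ^ n) (1 / (1 - r) ^ 2) := by
  simpa using hasSum_choose_mul_geometric_of_norm_lt_one 1 hr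

noncomputable def tortoiseTerm (s : ℝ) (n : ℕ) (x : ℝ) : ℝ :=
  ((n : ℝ) + 1) / ((n : ℝ) + 1 - s) * x ^ ((n : ℝ) + 1 - s)

section tortoiseTerm

variable {s : ℝ}

lemma tortoiseTerm_exponent_pos (hs : s < 1) (n : ℕ) : 0 < (n : ℝ) + 1 - s := by
  linarith [n.cast_nonneg (α := ℝ)]

lemma tortoiseTerm_nonneg (hs : s < 1) (n : ℕ) {x : ℝ} (hx : 0 ≤ x) : 0 ≤ tortoiseTerm s n x :=
  mul_nonneg (div_nonneg (by positivity) (tortoiseTerm_exponent_pos hs n).le) (rpow_nonneg hx _)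

lemma tortoiseTerm_le (hs : s < 1) (n : ℕ) {x : ℝ} (hx : 0 < x) :
    tortoiseTerm s n x ≤ x ^ (1 - s) / (1 - s) * (((n : ℝ) + 1) * x ^ n) := by
  have hcoeff : ((n : ℝ) + 1) / ((n : ℝ) + 1 - s) ≤ ((n : ℝ) + 1) / (1 - s) :=
    div_le_div_of_nonneg_left (by positivity) (by linarith) (by linarith [n.cast_nonneg (α := ℝ)])
  have hsplit : x ^ ((n : ℝ) + 1 - s) = x ^ (1 - s) * x ^ n := by
    rw [← rpow_add_natCast hx.ne']
    ring_nf
  calc tortoiseTerm s n x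
      ≤ ((n : ℝ) + 1) / (1 - s) * (x ^ (1 - s) * x ^ n) := by
        rw [tortoiseTerm, hsplit]
        exact mul_le_mul_of_nonneg_right hcoeff (by positivity)
    _ = x ^ (1 - s) / (1 - s) * (((n : ℝ) + 1) * x ^ n) := by ring

lemma summable_tortoiseTerm (hs : s < 1) {x : ℝ} (hx0 : 0 < x) (hx1 : x < 1) :
    Summable (fun n => tortoiseTerm s n x) := by
  have hgeom := hasSum_coe_add_one_mul_geometric_of_norm_lt_one
    (show ‖x‖ < 1 by rwa [norm_of_nonneg hx0.le])
  exact .of_nonneg_of_le (fun n => tortoiseTerm_nonneg hs n hx0.le)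
    (fun n => tortoiseTerm_le hs n hx0) (hgeom.summable.mul_left _)

lemma hasDerivAt_tortoiseTerm (hs : s < 1) (n : ℕ) {x : ℝ} (hx : 0 < x) :
    HasDerivAt (tortoiseTerm s n) (x ^ (-s) * (((n : ℝ) + 1) * x ^ n)) x := by
  refine ((hasDerivAt_rpow_const (p := (n : ℝ) + 1 - s) (.inl hx.ne')).const_mul
    (((n : ℝ) + 1) / ((n : ℝ) + 1 - s))).congr_deriv ?_
  rw [show (n : ℝ) + 1 - s - 1 = -s + n by ring, rpow_add_natCast hx.ne']
  field_simp [(tortoiseTerm_exponent_pos hs n).ne']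

lemma hasSum_deriv_tortoiseTerm {x : ℝ} (hx0 : 0 < x) (hx1 : x < 1) :
    HasSum (fun n : ℕ => x ^ (-s) * (((n : ℝ) + 1) * x ^ n)) (x ^ (-s) / (1 - x) ^ 2) := by
  simpa [div_eq_mul_inv] using (hasSum_coe_add_one_mul_geometric_of_norm_lt_one
    (show ‖x‖ < 1 by rwa [norm_of_nonneg hx0.le])).mul_left (x ^ (-s))

lemma norm_deriv_tortoiseTerm_le (hs : 0 ≤ s) (n : ℕ) {a b x : ℝ} (ha : 0 < a)
    (hx : x ∈ Set.Ioo a b) :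
    ‖x ^ (-s) * (((n : ℝ) + 1) * x ^ n)‖ ≤ a ^ (-s) * (((n : ℝ) + 1) * b ^ n) := by
  have hx0 : 0 < x := ha.trans hx.1
  rw [norm_of_nonneg (by positivity)]
  exact mul_le_mul (rpow_le_rpow_of_nonpos ha hx.1.le (neg_nonpos.mpr hs))
    (by gcongr; exact hx.2.le) (by positivity) (by positivity)

theorem hasDerivAt_tsum_tortoiseTerm (hs0 : 0 ≤ s) (hs1 : s < 1) {x : ℝ} (hx0 : 0 < x)
    (hx1 : x < 1) :
    HasDerivAt (fun y => ∑' n, tortoiseTerm s n y) (x ^ (-s) / (1 - x) ^ 2) x := by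
  set a := x / 2 with ha_def
  set b := (1 + x) / 2 with hb_def
  have ha : 0 < a := by positivity
  have hx : x ∈ Set.Ioo a b := ⟨by linarith, by linarith⟩
  have hb : ‖b‖ < 1 := by rw [norm_of_nonneg (by positivity)]; linarith
  have hdom : Summable (fun n : ℕ => a ^ (-s) * (((n : ℝ) + 1) * b ^ n)) :=
    (hasSum_coe_add_one_mul_geometric_of_norm_lt_one hb).summable.mul_left _
  rw [← (hasSum_deriv_tortoiseTerm hx0 hx1).tsum_eq]
  exact hasDerivAt_tsum_of_isPreconnected hdom isOpen_Ioo isPreconnected_Ioo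
    (fun n y hy => hasDerivAt_tortoiseTerm hs1 n (ha.trans hy.1))
    (fun n y hy => norm_deriv_tortoiseTerm_le hs0 n ha hy) hx (summable_tortoiseTerm hs1 hx0 hx1) hx

end tortoiseTerm

theorem tortoise_series_hasDerivAt_general
    (rs ζ : ℝ) (hζ : 1 < ζ)
    (F : ℝ → ℝ)
    (hF : ∀ z : ℝ, F z =
      ζ * rs * ∑' n : ℕ, (((n : ℝ) + 1) / ((n : ℝ) + 1 - 1 / ζ)) * z ^ ((n : ℝ) + 1 - 1 / ζ))
    (z : ℝ) (hz : z ∈ Set.Ioo (0 : ℝ) 1) :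
    Summable (fun n : ℕ =>
        (((n : ℝ) + 1) / ((n : ℝ) + 1 - 1 / ζ)) * z ^ ((n : ℝ) + 1 - 1 / ζ)) ∧
      HasDerivAt F (ζ * rs * z ^ (-(1 / ζ)) / (1 - z) ^ 2) z := by
  obtain ⟨hz0, hz1⟩ := hz
  have hs0 : 0 ≤ 1 / ζ := by positivity
  have hs1 : 1 / ζ < 1 := (div_lt_one (by linarith)).mpr hζ
  have hF' : F = fun y => ζ * rs * ∑' n, tortoiseTerm (1 / ζ) n y := funext hF
  refine ⟨summable_tortoiseTerm hs1 hz0 hz1, ?_⟩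
  rw [hF', mul_div_assoc]
  exact (hasDerivAt_tsum_tortoiseTerm hs0 hs1 hz0 hz1).const_mul (ζ * rs)

/-- ζ-tortoise coordinate as a convergent series: for `ζ > 1`, `r_s > 0` and `z ∈ (0,1)`,
the series `F(z) = ζ r_s Σ_{n≥0} ((n+1)/(n+1−1/ζ)) z^{n+1−1/ζ}` converges and `F` is
differentiable at `z` with `F'(z) = ζ r_s z^{−1/ζ}/(1−z)²`. -/
theorem tortoise_series_hasDerivAt
    (rs ζ : ℝ) (hrs : 0 < rs) (hζ : 1 < ζ)
    (F : ℝ → ℝ)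
    (hF : ∀ z : ℝ, F z =
      ζ * rs * ∑' n : ℕ, (((n : ℝ) + 1) / ((n : ℝ) + 1 - 1 / ζ)) * z ^ ((n : ℝ) + 1 - 1 / ζ))
    (z : ℝ) (hz : z ∈ Set.Ioo (0 : ℝ) 1) :
    Summable (fun n : ℕ =>
        (((n : ℝ) + 1) / ((n : ℝ) + 1 - 1 / ζ)) * z ^ ((n : ℝ) + 1 - 1 / ζ)) ∧
      HasDerivAt F (ζ * rs * z ^ (-(1 / ζ)) / (1 - z) ^ 2) z :=
  tortoise_series_hasDerivAt_general rs ζ hζ F hF z hz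
end

section
/- Light-cone behavior across the interior-exterior boundary: the outgoing-null slope S(ρ) satisfies lim_{ρ→+∞} S(ρ) = 2, and as ρ → r_s⁺: S(ρ) → +∞ if ζ < 2 (i.e. |k̃| < 1), S(ρ) → 8 if ζ = 2 (i.e. |k̃| = 1), and S(ρ) → 0 if ζ > 2 (i.e. |k̃| > 1); as ρ → r_s⁻: S(ρ) → −∞ if ζ < 2, S(ρ) → −8 if ζ = 2, and S(ρ) → 0 if ζ > 2. -/
open Real Filter Topology

/-!
In the variable `x = 1 - r_s / ρ` the slope is `sign x · |x|^(ζ-2) · F(x)`, where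
`F(x) = 2ζ²(1-x)² / (1 - sign x · |x|^ζ)²` is continuous at `0` with `F(0) = 2ζ²`. Hence near the
horizon `ρ = r_s` (i.e. `x = 0`) the behaviour of `S` is that of `± |x|^(ζ-2)`, with the sign of
`x`. As `ρ → ∞` we have `x → 1`, and `S = 2ζ² x^(ζ-2) / ((1 - x^ζ)/(1 - x))²` tends to
`2ζ²/ζ² = 2` because the difference quotient tends to the derivative `ζ` of `x^ζ` at `1`.
-/

noncomputable def nullSlope (ζ x : ℝ) : ℝ :=
  2 * ζ ^ 2 * (1 - x) ^ 2 * |x| ^ (ζ - 1) / (x * (1 - Real.sign x * |x| ^ ζ) ^ 2)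

noncomputable def nullSlopeFactor (ζ x : ℝ) : ℝ :=
  2 * ζ ^ 2 * (1 - x) ^ 2 / (1 - Real.sign x * |x| ^ ζ) ^ 2

lemma abs_rpow_sub_one_div_self {x : ℝ} (hx : x ≠ 0) (p : ℝ) :
    |x| ^ (p - 1) / x = Real.sign x * |x| ^ (p - 2) := by
  have hsplit : |x| ^ (p - 1) = |x| ^ (p - 2) * |x| := by
    rw [show p - 1 = (p - 2) + 1 by ring, rpow_add (abs_pos.2 hx), rpow_one]
  rcases hx.lt_or_gt with hneg | hpos
  · rw [hsplit, abs_of_neg hneg, sign_of_neg hneg]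
    field_simp
  · rw [hsplit, abs_of_pos hpos, sign_of_pos hpos]
    field_simp

lemma nullSlope_eq {x : ℝ} (hx : x ≠ 0) (ζ : ℝ) :
    nullSlope ζ x = Real.sign x * (|x| ^ (ζ - 2) * nullSlopeFactor ζ x) := by
  rw [nullSlope, nullSlopeFactor, ← mul_assoc, ← abs_rpow_sub_one_div_self hx,
    mul_comm _ (|x| ^ (ζ - 1)), mul_div_mul_comm]

lemma nullSlope_eq_div_slope {x : ℝ} (hx : 0 < x) (ζ : ℝ) :
    nullSlope ζ x = 2 * ζ ^ 2 * x ^ (ζ - 2) / slope (fun y => y ^ ζ) 1 x ^ 2 := by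
  rw [nullSlope_eq hx.ne', nullSlopeFactor, sign_of_pos hx, abs_of_pos hx, slope_def_field,
    one_rpow, div_pow, div_div_eq_mul_div, ← neg_sub (1 : ℝ) x, ← neg_sub (1 : ℝ) (x ^ ζ),
    neg_sq, neg_sq]
  ring

lemma tendsto_abs_rpow_zero {p : ℝ} (hp : 0 < p) :
    Tendsto (fun x : ℝ => |x| ^ p) (𝓝 0) (𝓝 0) := by
  simpa [zero_rpow hp.ne'] using
    ((continuous_abs.tendsto (0 : ℝ)).rpow_const (Or.inr hp.le) :)

lemma tendsto_sign_mul_abs_rpow_zero {p : ℝ} (hp : 0 < p) :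
    Tendsto (fun x : ℝ => Real.sign x * |x| ^ p) (𝓝 0) (𝓝 0) := by
  refine squeeze_zero_norm (fun x => ?_) (tendsto_abs_rpow_zero hp)
  rw [norm_mul, norm_of_nonneg (rpow_nonneg (abs_nonneg x) p)]
  refine mul_le_of_le_one_left (rpow_nonneg (abs_nonneg x) p) ?_
  rcases sign_apply_eq x with h | h | h <;> simp [h]

lemma tendsto_nullSlopeFactor_zero {ζ : ℝ} (hζ : 0 < ζ) :
    Tendsto (nullSlopeFactor ζ) (𝓝 0) (𝓝 (2 * ζ ^ 2)) := by
  convert ((tendsto_const_nhds (x := 2 * ζ ^ 2)).mul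
    ((tendsto_const_nhds (x := (1 : ℝ)).sub tendsto_id).pow 2)).div
    ((tendsto_const_nhds (x := (1 : ℝ)).sub (tendsto_sign_mul_abs_rpow_zero hζ)).pow 2)
    (by norm_num) using 2
  · rfl
  · norm_num

lemma tendsto_abs_rpow_mul_nullSlopeFactor_atTop {ζ : ℝ} (hζ₀ : 0 < ζ) (hζ₂ : ζ < 2) :
    Tendsto (fun x => |x| ^ (ζ - 2) * nullSlopeFactor ζ x) (𝓝[≠] 0) atTop :=
  ((tendsto_rpow_neg_nhdsGT_zero (by linarith)).comp tendsto_abs_nhdsNE_zero).atTop_mul_pos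
    (by positivity) ((tendsto_nullSlopeFactor_zero hζ₀).mono_left nhdsWithin_le_nhds)

lemma tendsto_abs_rpow_mul_nullSlopeFactor_two :
    Tendsto (fun x => |x| ^ ((2 : ℝ) - 2) * nullSlopeFactor 2 x) (𝓝[≠] 0) (𝓝 8) := by
  have h := (tendsto_nullSlopeFactor_zero two_pos).mono_left (nhdsWithin_le_nhds (s := {0}ᶜ))
  norm_num at h ⊢
  exact h

lemma tendsto_abs_rpow_mul_nullSlopeFactor_zero {ζ : ℝ} (hζ : 2 < ζ) :
    Tendsto (fun x => |x| ^ (ζ - 2) * nullSlopeFactor ζ x) (𝓝[≠] 0) (𝓝 0) := by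
  simpa using ((tendsto_abs_rpow_zero (sub_pos.2 hζ)).mul
    (tendsto_nullSlopeFactor_zero (by linarith))).mono_left nhdsWithin_le_nhds

lemma tendsto_nullSlope_nhdsGT_zero {ζ : ℝ} {l : Filter ℝ}
    (h : Tendsto (fun x => |x| ^ (ζ - 2) * nullSlopeFactor ζ x) (𝓝[≠] 0) l) :
    Tendsto (nullSlope ζ) (𝓝[>] 0) l := by
  refine (h.mono_left (nhdsWithin_mono _ fun x hx => ne_of_gt hx)).congr' ?_
  filter_upwards [self_mem_nhdsWithin] with x (hx : 0 < x)
  rw [nullSlope_eq hx.ne', sign_of_pos hx, one_mul]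

lemma tendsto_neg_nullSlope_nhdsLT_zero {ζ : ℝ} {l : Filter ℝ}
    (h : Tendsto (fun x => |x| ^ (ζ - 2) * nullSlopeFactor ζ x) (𝓝[≠] 0) l) :
    Tendsto (fun x => -nullSlope ζ x) (𝓝[<] 0) l := by
  refine (h.mono_left (nhdsWithin_mono _ fun x hx => ne_of_lt hx)).congr' ?_
  filter_upwards [self_mem_nhdsWithin] with x (hx : x < 0)
  rw [nullSlope_eq hx.ne, sign_of_neg hx, neg_one_mul, neg_neg]

lemma tendsto_nullSlope_nhdsNE_one {ζ : ℝ} (hζ : ζ ≠ 0) :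
    Tendsto (nullSlope ζ) (𝓝[≠] 1) (𝓝 2) := by
  have hderiv : HasDerivAt (fun y : ℝ => y ^ ζ) ζ 1 := by
    simpa using hasDerivAt_rpow_const (x := 1) (p := ζ) (Or.inl one_ne_zero)
  have hpow : Tendsto (fun x : ℝ => x ^ (ζ - 2)) (𝓝[≠] 1) (𝓝 1) := by
    simpa using ((continuousAt_id.rpow_const (Or.inl one_ne_zero)).tendsto (x := (1 : ℝ))
      |>.mono_left nhdsWithin_le_nhds :)
  have h := ((tendsto_const_nhds (x := 2 * ζ ^ 2)).mul hpow).div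
    ((hasDerivAt_iff_tendsto_slope.mp hderiv).pow 2) (pow_ne_zero 2 hζ)
  rw [mul_one, mul_div_assoc, div_self (pow_ne_zero 2 hζ), mul_one] at h
  refine h.congr' ?_
  filter_upwards [nhdsWithin_le_nhds (eventually_gt_nhds one_pos)] with x hx
  exact (nullSlope_eq_div_slope hx ζ).symm

lemma tendsto_one_sub_div_nhds {rs : ℝ} (hrs : rs ≠ 0) :
    Tendsto (fun ρ => 1 - rs / ρ) (𝓝 rs) (𝓝 0) := by
  have hc : ContinuousAt (fun ρ => 1 - rs / ρ) rs := by fun_prop (disch := exact hrs)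
  simpa [hrs] using hc.tendsto

lemma tendsto_one_sub_div_nhdsGT {rs : ℝ} (hrs : 0 < rs) :
    Tendsto (fun ρ => 1 - rs / ρ) (𝓝[>] rs) (𝓝[>] 0) := by
  refine tendsto_nhdsWithin_iff.2
    ⟨(tendsto_one_sub_div_nhds hrs.ne').mono_left nhdsWithin_le_nhds, ?_⟩
  filter_upwards [self_mem_nhdsWithin] with ρ (hρ : rs < ρ)
  exact sub_pos.2 ((div_lt_one (hrs.trans hρ)).2 hρ)

lemma tendsto_one_sub_div_nhdsLT {rs : ℝ} (hrs : 0 < rs) :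
    Tendsto (fun ρ => 1 - rs / ρ) (𝓝[<] rs) (𝓝[<] 0) := by
  refine tendsto_nhdsWithin_iff.2
    ⟨(tendsto_one_sub_div_nhds hrs.ne').mono_left nhdsWithin_le_nhds, ?_⟩
  filter_upwards [self_mem_nhdsWithin, nhdsWithin_le_nhds (eventually_gt_nhds hrs)]
    with ρ (hρ : ρ < rs) hρ₀
  exact sub_neg.2 ((one_lt_div hρ₀).2 hρ)

lemma tendsto_one_sub_div_atTop {rs : ℝ} (hrs : rs ≠ 0) :
    Tendsto (fun ρ => 1 - rs / ρ) atTop (𝓝[≠] 1) := by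
  refine tendsto_nhdsWithin_iff.2 ⟨?_, ?_⟩
  · simpa using (tendsto_const_nhds (x := (1 : ℝ))).sub
      ((tendsto_const_nhds (x := rs)).div_atTop tendsto_id)
  · filter_upwards [eventually_gt_atTop 0] with ρ hρ
    simpa using div_ne_zero hrs hρ.ne'

/-- Light-cone behavior across the interior-exterior boundary: the outgoing-null slope
`S(ρ)` tends to `2` as `ρ → +∞`; as `ρ → r_s⁺`: `S → +∞` if `ζ < 2` (`|k̃| < 1`),
`S → 8` if `ζ = 2` (`|k̃| = 1`), `S → 0` if `ζ > 2` (`|k̃| > 1`); as `ρ → r_s⁻`: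
`S → −∞` if `ζ < 2`, `S → −8` if `ζ = 2`, `S → 0` if `ζ > 2`. -/
theorem lightcone_slope_behavior
    (rs kt : ℝ) (hrs : 0 < rs)
    (ζ : ℝ) (hζ : ζ = Real.sqrt (1 + 3 * kt ^ 2))
    (S : ℝ → ℝ)
    (hS : ∀ ρ : ℝ, 0 < ρ → ρ ≠ rs → S ρ =
      2 * ζ ^ 2 * (rs / ρ) ^ 2 * |1 - rs / ρ| ^ (ζ - 1) /
        ((1 - rs / ρ) * (1 - Real.sign (1 - rs / ρ) * |1 - rs / ρ| ^ ζ) ^ 2)) :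
    Tendsto S atTop (𝓝 2) ∧
      (ζ < 2 → Tendsto S (𝓝[>] rs) atTop) ∧
      (ζ = 2 → Tendsto S (𝓝[>] rs) (𝓝 8)) ∧
      (2 < ζ → Tendsto S (𝓝[>] rs) (𝓝 0)) ∧
      (ζ < 2 → Tendsto S (𝓝[<] rs) atBot) ∧
      (ζ = 2 → Tendsto S (𝓝[<] rs) (𝓝 (-8))) ∧
      (2 < ζ → Tendsto S (𝓝[<] rs) (𝓝 0)) := by
  have hζ₀ : 0 < ζ := hζ ▸ sqrt_pos.2 (by positivity)
  have hS' : ∀ ρ, 0 < ρ → ρ ≠ rs → S ρ = nullSlope ζ (1 - rs / ρ) := fun ρ hρ₀ hρ => by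
    rw [hS ρ hρ₀ hρ, nullSlope, sub_sub_cancel]
  have hpos : ∀ᶠ ρ in 𝓝 rs, 0 < ρ := eventually_gt_nhds hrs
  have hright : ∀ {l}, Tendsto (fun x => |x| ^ (ζ - 2) * nullSlopeFactor ζ x) (𝓝[≠] 0) l →
      Tendsto S (𝓝[>] rs) l := fun h =>
    ((tendsto_nullSlope_nhdsGT_zero h).comp (tendsto_one_sub_div_nhdsGT hrs)).congr' <| by
      filter_upwards [self_mem_nhdsWithin, nhdsWithin_le_nhds hpos] with ρ hρ hρ₀
      exact (hS' ρ hρ₀ (ne_of_gt hρ)).symm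
  have hleft : ∀ {l}, Tendsto (fun x => |x| ^ (ζ - 2) * nullSlopeFactor ζ x) (𝓝[≠] 0) l →
      Tendsto (fun ρ => -S ρ) (𝓝[<] rs) l := fun h =>
    ((tendsto_neg_nullSlope_nhdsLT_zero h).comp (tendsto_one_sub_div_nhdsLT hrs)).congr' <| by
      filter_upwards [self_mem_nhdsWithin, nhdsWithin_le_nhds hpos] with ρ hρ hρ₀
      simp only [Function.comp_apply, hS' ρ hρ₀ (ne_of_lt hρ)]
  have hinfty : Tendsto S atTop (𝓝 2) :=
    ((tendsto_nullSlope_nhdsNE_one hζ₀.ne').comp (tendsto_one_sub_div_atTop hrs.ne')).congr' <| by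
      filter_upwards [eventually_gt_atTop rs] with ρ hρ
      exact (hS' ρ (hrs.trans hρ) hρ.ne').symm
  refine ⟨hinfty, fun h => hright (tendsto_abs_rpow_mul_nullSlopeFactor_atTop hζ₀ h),
    fun h => hright (h ▸ tendsto_abs_rpow_mul_nullSlopeFactor_two),
    fun h => hright (tendsto_abs_rpow_mul_nullSlopeFactor_zero h),
    fun h => tendsto_neg_atTop_iff.1 (hleft (tendsto_abs_rpow_mul_nullSlopeFactor_atTop hζ₀ h)),
    fun h => by simpa using (hleft (h ▸ tendsto_abs_rpow_mul_nullSlopeFactor_two)).neg,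
    fun h => by simpa using (hleft (tendsto_abs_rpow_mul_nullSlopeFactor_zero h)).neg⟩
end
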